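/- arXiv:2304.06290 — 6 statements merged into one kernel-verified Lean document; each statement's English description precedes it below -/
import Mathlib

section
/- Let m, p, q be positive integers with at most one of them equal to 1, and let n = m + p + q − 1 be the order of P(m,p,q). If exactly two of m, p, q are odd, then the independence number of P(m,p,q) equals ⌈n/2⌉ − 1; otherwise it equals ⌈n/2⌉. -/
open SimpleGraph

/-- The spectral radius of a finite simple graph: the largest eigenvalue of its
adjacency matrix, i.e. the supremum of its (real) spectrum. -/
noncomputable def specRad {V : Type*} [Fintype V] (G : SimpleGraph V) : ℝ := by
  classical exact sSup (spectrum ℝ (G.adjMatrix ℝ))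

/-- The adjacency matrix of a finite simple graph over ℝ. -/
noncomputable def adjMat {V : Type*} [Fintype V] (G : SimpleGraph V) : Matrix V V ℝ := by
  classical exact G.adjMatrix ℝ

/-- The independence number of a graph: the maximum size of a set of pairwise
non-adjacent vertices. -/
noncomputable def indNum {V : Type*} [Fintype V] (G : SimpleGraph V) : ℕ :=
  sSup {k | ∃ s : Finset V, (∀ u ∈ s, ∀ v ∈ s, ¬ G.Adj u v) ∧ s.card = k}

/-- `BGraph m p q` is the graph `B(m,p,q)` obtained by attaching a cycle `C_m` and a
cycle `C_q` at the two end vertices of a path with `p` edges.  Its vertices are the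
`m` vertices `u_0, …, u_{m-1}` of the `m`-cycle, the `p-1` internal vertices
`w_1, …, w_{p-1}` of the path, and the `q` vertices `v_0, …, v_{q-1}` of the `q`-cycle;
the path joins `u_0` and `v_0`. -/
def BGraph (m p q : ℕ) : SimpleGraph (Fin m ⊕ Fin (p - 1) ⊕ Fin q) :=
  SimpleGraph.fromRel (fun a b =>
    match a, b with
    | Sum.inl i, Sum.inl j => (i.val + 1) % m = j.val
    | Sum.inr (Sum.inl i), Sum.inr (Sum.inl j) => i.val + 1 = j.val
    | Sum.inl i, Sum.inr (Sum.inl j) => i.val = 0 ∧ j.val = 0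
    | Sum.inr (Sum.inl i), Sum.inr (Sum.inr j) => i.val = p - 2 ∧ j.val = 0
    | Sum.inl i, Sum.inr (Sum.inr j) => p = 1 ∧ i.val = 0 ∧ j.val = 0
    | Sum.inr (Sum.inr i), Sum.inr (Sum.inr j) => (i.val + 1) % q = j.val
    | _, _ => False)

/-- `CGraph m q` is the graph `C(m,q)` obtained by identifying one vertex of a cycle
`C_m` with one vertex of a cycle `C_q`.  Its vertices are the `m` vertices of the
`m`-cycle together with the `q-1` remaining vertices of the `q`-cycle, which is
attached at the vertex `Sum.inl 0`. -/
def CGraph (m q : ℕ) : SimpleGraph (Fin m ⊕ Fin (q - 1)) :=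
  SimpleGraph.fromRel (fun a b =>
    match a, b with
    | Sum.inl i, Sum.inl j => (i.val + 1) % m = j.val
    | Sum.inr i, Sum.inr j => i.val + 1 = j.val
    | Sum.inl i, Sum.inr j => i.val = 0 ∧ (j.val = 0 ∨ j.val = q - 2)
    | _, _ => False)

/-- `PGraph m p q` is the graph `P(m,p,q)` obtained by identifying the two end
vertices of three internally disjoint paths with `m`, `p` and `q` edges respectively.
Its vertices are the two end vertices `u_0 = Sum.inl ()` and `v_0 = Sum.inr (Sum.inl ())`,
together with the internal vertices of the three paths. -/
def PGraph (m p q : ℕ) :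
    SimpleGraph (Unit ⊕ Unit ⊕ Fin (m - 1) ⊕ Fin (p - 1) ⊕ Fin (q - 1)) :=
  SimpleGraph.fromRel (fun a b =>
    match a, b with
    | Sum.inl _, Sum.inr (Sum.inl _) => m = 1 ∨ p = 1 ∨ q = 1
    | Sum.inl _, Sum.inr (Sum.inr (Sum.inl i)) => i.val = 0
    | Sum.inl _, Sum.inr (Sum.inr (Sum.inr (Sum.inl i))) => i.val = 0
    | Sum.inl _, Sum.inr (Sum.inr (Sum.inr (Sum.inr i))) => i.val = 0
    | Sum.inr (Sum.inl _), Sum.inr (Sum.inr (Sum.inl i)) => i.val = m - 2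
    | Sum.inr (Sum.inl _), Sum.inr (Sum.inr (Sum.inr (Sum.inl i))) => i.val = p - 2
    | Sum.inr (Sum.inl _), Sum.inr (Sum.inr (Sum.inr (Sum.inr i))) => i.val = q - 2
    | Sum.inr (Sum.inr (Sum.inl i)), Sum.inr (Sum.inr (Sum.inl j)) => i.val + 1 = j.val
    | Sum.inr (Sum.inr (Sum.inr (Sum.inl i))), Sum.inr (Sum.inr (Sum.inr (Sum.inl j))) =>
        i.val + 1 = j.val
    | Sum.inr (Sum.inr (Sum.inr (Sum.inr i))), Sum.inr (Sum.inr (Sum.inr (Sum.inr j))) =>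
        i.val + 1 = j.val
    | _, _ => False)

/-- `H` is contained in `G` as a subgraph, i.e. `G` has a subgraph isomorphic to `H`. -/
def containsCopy {W V : Type*} (H : SimpleGraph W) (G : SimpleGraph V) : Prop :=
  ∃ f : H →g G, Function.Injective f

/-!
Let `s` be independent and let `a, b ∈ {0, 1}` record whether `s` contains the two branch
vertices `u` and `v`. On a branch path with `k` edges the inner vertices of `s` are pairwise
non-consecutive and avoid the neighbours of the chosen branch vertices, so there are at most
`(k - a - b) / 2` of them; moreover `a = b = 1` forces every path to have at least two edges,
since otherwise `u` and `v` are adjacent.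
Summing over the three paths, `α = m / 2 + p / 2 + q / 2`, plus one when `m, p, q` are all odd
(then `a = 1, b = 0` is better). Every other inner vertex, starting next to `u`, or `u` together
with every other inner vertex starting two steps from `u`, attains these values.
-/

open Finset

lemma Finset.card_le_of_subset_Ico_of_add_one_notMem {T : Finset ℕ} {lo hi : ℕ}
    (hT : T ⊆ Ico lo hi) (h : ∀ i ∈ T, i + 1 ∉ T) : #T ≤ (hi + 1 - lo) / 2 := by
  calc #T ≤ #(range ((hi + 1 - lo) / 2)) := by
        refine card_le_card_of_injOn (fun i => (i - lo) / 2) (fun i hi => ?_)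
          fun i hi j hj hij => ?_
        · have := mem_Ico.1 (hT hi)
          simp only [coe_range, Set.mem_Iio]
          omega
        · have := mem_Ico.1 (hT hi)
          have := mem_Ico.1 (hT hj)
          simp only at hij
          by_contra hne
          rcases Nat.lt_or_gt_of_ne hne with hlt | hlt
          · exact h i hi (by rwa [show i + 1 = j by omega])
          · exact h j hj (by rwa [show j + 1 = i by omega])
    _ = (hi + 1 - lo) / 2 := card_range _

lemma Finset.card_eq_ite_unit_mem (t : Finset Unit) : #t = if () ∈ t then 1 else 0 := by
  by_cases h : () ∈ t <;>
    simp [h, card_eq_one, eq_empty_iff_forall_notMem, eq_singleton_iff_unique_mem]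

lemma Fin.card_filter_odd_val (k : ℕ) : #{i : Fin k | Odd (i : ℕ)} = k / 2 := by
  induction k with
  | zero => rfl
  | succ k ih =>
    rw [card_filter, Fin.sum_univ_castSucc, ← card_filter]
    simp only [Fin.val_castSucc, Fin.val_last, ih]
    split_ifs with h <;> simp only [Nat.odd_iff] at h <;> omega

lemma Fin.card_filter_even_val (k : ℕ) : #{i : Fin k | Even (i : ℕ)} = (k + 1) / 2 := by
  have := card_filter_add_card_filter_not (s := univ) fun i : Fin k => Even (i : ℕ)
  simp only [Nat.not_even_iff_odd, Fin.card_filter_odd_val, card_univ, Fintype.card_fin] at this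
  omega

namespace SimpleGraph

variable {V : Type*} {G : SimpleGraph V}

lemma isIndepSet_iff_forall_not_adj {s : Set V} :
    G.IsIndepSet s ↔ ∀ x ∈ s, ∀ y ∈ s, ¬ G.Adj x y :=
  ⟨fun h _ hx _ hy hxy => h hx hy (G.ne_of_adj hxy) hxy, fun h _ hx _ hy _ => h _ hx _ hy⟩

lemma indNum_eq_indepNum [Fintype V] (G : SimpleGraph V) : indNum G = G.indepNum := by
  simp only [indNum, indepNum, isNIndepSet_iff, isIndepSet_iff_forall_not_adj, mem_coe]

/-- `f 0, …, f (k - 2)` are, in this order, the inner vertices of a `u`–`v` path with `k` edges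
(not necessarily induced). -/
structure IsPathInterior (G : SimpleGraph V) (u v : V) (k : ℕ) (f : Fin (k - 1) → V) :
    Prop where
  adj_succ : ∀ i j : Fin (k - 1), (i : ℕ) + 1 = j → G.Adj (f i) (f j)
  adj_first : ∀ i : Fin (k - 1), (i : ℕ) = 0 → G.Adj u (f i)
  adj_last : ∀ i : Fin (k - 1), (i : ℕ) = k - 2 → G.Adj (f i) v

lemma IsPathInterior.card_le [DecidableEq V] {u v : V} {k : ℕ} {f : Fin (k - 1) → V}
    (hf : G.IsPathInterior u v k f) {s : Finset V} (hs : G.IsIndepSet s)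
    {T : Finset (Fin (k - 1))} (hT : ∀ i ∈ T, f i ∈ s) :
    #T ≤ (k - (if u ∈ s then 1 else 0) - (if v ∈ s then 1 else 0)) / 2 := by
  rw [isIndepSet_iff_forall_not_adj] at hs
  have hIco : T.map Fin.valEmbedding ⊆
      Ico (if u ∈ s then 1 else 0) (k - 1 - if v ∈ s then 1 else 0) := by
    intro x hx
    obtain ⟨i, hi, rfl⟩ := mem_map.1 hx
    have hfirst : u ∈ s → (i : ℕ) ≠ 0 := fun hu h => hs _ hu _ (hT i hi) (hf.adj_first i h)
    have hlast : v ∈ s → (i : ℕ) ≠ k - 2 := fun hv h => hs _ (hT i hi) _ hv (hf.adj_last i h)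
    have := i.isLt
    simp only [mem_Ico, Fin.valEmbedding_apply]
    split_ifs at hfirst hlast ⊢ <;> grind
  have hsucc : ∀ x ∈ T.map Fin.valEmbedding, x + 1 ∉ T.map Fin.valEmbedding := by
    simp only [mem_map, Fin.valEmbedding_apply]
    rintro _ ⟨i, hi, rfl⟩ ⟨j, hj, hij⟩
    exact hs _ (hT i hi) _ (hT j hj) (hf.adj_succ i j hij.symm)
  have := card_le_of_subset_Ico_of_add_one_notMem hIco hsucc
  rw [card_map] at this
  split_ifs at this ⊢ <;> omega

end SimpleGraph

namespace PGraph

variable {m p q : ℕ}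

lemma isPathInterior_left :
    (PGraph m p q).IsPathInterior (Sum.inl ()) (Sum.inr (Sum.inl ())) m
      (fun i => Sum.inr (Sum.inr (Sum.inl i))) where
  adj_succ i j h := by simp [PGraph, h]; omega
  adj_first i h := by simp [PGraph, h]
  adj_last i h := by simp [PGraph, h]

lemma isPathInterior_mid :
    (PGraph m p q).IsPathInterior (Sum.inl ()) (Sum.inr (Sum.inl ())) p
      (fun i => Sum.inr (Sum.inr (Sum.inr (Sum.inl i)))) where
  adj_succ i j h := by simp [PGraph, h]; omega
  adj_first i h := by simp [PGraph, h]
  adj_last i h := by simp [PGraph, h]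

lemma isPathInterior_right :
    (PGraph m p q).IsPathInterior (Sum.inl ()) (Sum.inr (Sum.inl ())) q
      (fun i => Sum.inr (Sum.inr (Sum.inr (Sum.inr i)))) where
  adj_succ i j h := by simp [PGraph, h]; omega
  adj_first i h := by simp [PGraph, h]
  adj_last i h := by simp [PGraph, h]

lemma adj_inl_inr_inl (h : m = 1 ∨ p = 1 ∨ q = 1) :
    (PGraph m p q).Adj (Sum.inl ()) (Sum.inr (Sum.inl ())) := by
  simp [PGraph, h]

theorem card_le_of_isIndepSet (hm : 1 ≤ m) (hp : 1 ≤ p) (hq : 1 ≤ q)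
    {s : Finset (Unit ⊕ Unit ⊕ Fin (m - 1) ⊕ Fin (p - 1) ⊕ Fin (q - 1))}
    (hs : (PGraph m p q).IsIndepSet s) :
    #s ≤ m / 2 + p / 2 + q / 2 + if Odd m ∧ Odd p ∧ Odd q then 1 else 0 := by
  have hcard : #s = #s.toLeft + #s.toRight.toLeft + #s.toRight.toRight.toLeft +
      #s.toRight.toRight.toRight.toLeft + #s.toRight.toRight.toRight.toRight := by
    simp only [add_assoc, card_toLeft_add_card_toRight]
  have hleft := isPathInterior_left.card_le hs (T := s.toRight.toRight.toLeft) (by simp)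
  have hmid := isPathInterior_mid.card_le hs (T := s.toRight.toRight.toRight.toLeft) (by simp)
  have hright := isPathInterior_right.card_le hs (T := s.toRight.toRight.toRight.toRight)
    (by simp)
  have hends : Sum.inl () ∈ s → Sum.inr (Sum.inl ()) ∈ s → 2 ≤ m ∧ 2 ≤ p ∧ 2 ≤ q :=
    fun hu hv => by
      have : ¬ (m = 1 ∨ p = 1 ∨ q = 1) := fun h => hs hu hv (by simp) (adj_inl_inr_inl h)
      omega
  rw [card_eq_ite_unit_mem, card_eq_ite_unit_mem] at hcard
  simp only [mem_toLeft, mem_toRight] at hcard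
  by_cases hu : Sum.inl () ∈ s <;> by_cases hv : Sum.inr (Sum.inl ()) ∈ s <;>
    simp only [hu, hv, if_true, if_false, true_implies, false_implies]
      at hcard hleft hmid hright hends <;>
    simp only [Nat.odd_iff] <;> split_ifs <;> omega

/-- Index `i` on each path lies at distance `i + 1` from `Sum.inl ()`. -/
def interiorOfParity (m p q : ℕ) (P : ℕ → Prop) [DecidablePred P] :
    Finset (Unit ⊕ Unit ⊕ Fin (m - 1) ⊕ Fin (p - 1) ⊕ Fin (q - 1)) :=
  (∅ : Finset Unit).disjSum <| (∅ : Finset Unit).disjSum <|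
    ({i | P i} : Finset (Fin (m - 1))).disjSum <|
      ({i | P i} : Finset (Fin (p - 1))).disjSum ({i | P i} : Finset (Fin (q - 1)))

lemma isIndepSet_interiorOfParity_even :
    (PGraph m p q).IsIndepSet (interiorOfParity m p q Even) := by
  rw [isIndepSet_iff_forall_not_adj]
  rintro (_ | _ | i | i | i) hx (_ | _ | j | j | j) hy <;>
    simp only [interiorOfParity, inl_mem_disjSum, inr_mem_disjSum, mem_filter, mem_univ,
      true_and, notMem_empty, mem_coe, Nat.even_iff] at hx hy ⊢
  all_goals simp [PGraph] <;> omega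

lemma isIndepSet_insert_interiorOfParity_odd :
    (PGraph m p q).IsIndepSet ↑(insert (Sum.inl ()) (interiorOfParity m p q Odd)) := by
  rw [isIndepSet_iff_forall_not_adj]
  rintro (_ | _ | i | i | i) hx (_ | _ | j | j | j) hy <;>
    simp only [interiorOfParity, inl_mem_disjSum, inr_mem_disjSum, mem_filter, mem_univ,
      true_and, notMem_empty, coe_insert, Set.mem_insert_iff, mem_coe, Nat.odd_iff,
      reduceCtorEq, or_false, false_or] at hx hy ⊢
  all_goals simp [PGraph] <;> omega

lemma card_interiorOfParity_even (hm : 1 ≤ m) (hp : 1 ≤ p) (hq : 1 ≤ q) :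
    #(interiorOfParity m p q Even) = m / 2 + p / 2 + q / 2 := by
  simp only [interiorOfParity, card_disjSum, card_empty, Fin.card_filter_even_val]
  omega

lemma card_insert_interiorOfParity_odd :
    #(insert (Sum.inl ()) (interiorOfParity m p q Odd)) =
      1 + (m - 1) / 2 + (p - 1) / 2 + (q - 1) / 2 := by
  rw [card_insert_of_notMem (by simp [interiorOfParity])]
  simp only [interiorOfParity, card_disjSum, card_empty, Fin.card_filter_odd_val]
  omega

theorem indepNum_eq (hm : 1 ≤ m) (hp : 1 ≤ p) (hq : 1 ≤ q) :
    (PGraph m p q).indepNum =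
      m / 2 + p / 2 + q / 2 + if Odd m ∧ Odd p ∧ Odd q then 1 else 0 := by
  obtain ⟨s, hs⟩ := (PGraph m p q).exists_isNIndepSet_indepNum
  refine le_antisymm (hs.card_eq ▸ card_le_of_isIndepSet hm hp hq hs.isIndepSet) ?_
  split_ifs with hodd
  · calc m / 2 + p / 2 + q / 2 + 1 = #(insert (Sum.inl ()) (interiorOfParity m p q Odd)) := by
          rw [card_insert_interiorOfParity_odd]
          simp only [Nat.odd_iff] at hodd
          omega
      _ ≤ _ := isIndepSet_insert_interiorOfParity_odd.card_le_indepNum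
  · exact card_interiorOfParity_even hm hp hq ▸ isIndepSet_interiorOfParity_even.card_le_indepNum

end PGraph

theorem indNum_PGraph_general (m p q : ℕ) (hm : 1 ≤ m) (hp : 1 ≤ p) (hq : 1 ≤ q)
    (n : ℕ) (hn : n = m + p + q - 1) :
    (((Odd m ∧ Odd p ∧ ¬ Odd q) ∨ (Odd m ∧ ¬ Odd p ∧ Odd q) ∨ (¬ Odd m ∧ Odd p ∧ Odd q)) →
      indNum (PGraph m p q) = (n + 1) / 2 - 1) ∧
    (¬ ((Odd m ∧ Odd p ∧ ¬ Odd q) ∨ (Odd m ∧ ¬ Odd p ∧ Odd q) ∨ (¬ Odd m ∧ Odd p ∧ Odd q)) →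
      indNum (PGraph m p q) = (n + 1) / 2) := by
  rw [indNum_eq_indepNum, PGraph.indepNum_eq hm hp hq]
  simp only [← Nat.not_even_iff_odd, Nat.even_iff]
  split_ifs <;> omega

/-- Let `m, p, q` be positive integers, at most one of them equal to
`1`, and let `n = m + p + q - 1` be the order of `P(m,p,q)`.  If exactly two of
`m, p, q` are odd, then `α(P(m,p,q)) = ⌈n/2⌉ - 1`; otherwise `α(P(m,p,q)) = ⌈n/2⌉`.
(Here `⌈n/2⌉ = (n+1)/2` in natural-number arithmetic.) -/
theorem indNum_PGraph (m p q : ℕ) (hm : 1 ≤ m) (hp : 1 ≤ p) (hq : 1 ≤ q)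
    (hone : ¬ (m = 1 ∧ p = 1) ∧ ¬ (m = 1 ∧ q = 1) ∧ ¬ (p = 1 ∧ q = 1))
    (n : ℕ) (hn : n = m + p + q - 1) :
    (((Odd m ∧ Odd p ∧ ¬ Odd q) ∨ (Odd m ∧ ¬ Odd p ∧ Odd q) ∨ (¬ Odd m ∧ Odd p ∧ Odd q)) →
      indNum (PGraph m p q) = (n + 1) / 2 - 1) ∧
    (¬ ((Odd m ∧ Odd p ∧ ¬ Odd q) ∨ (Odd m ∧ ¬ Odd p ∧ Odd q) ∨ (¬ Odd m ∧ Odd p ∧ Odd q)) →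
      indNum (PGraph m p q) = (n + 1) / 2) :=
  indNum_PGraph_general m p q hm hp hq n hn
end

section
/- Let m, q ≥ 3 be integers and let n = m + q − 1 be the order of C(m,q). If both m and q are odd, then the independence number of C(m,q) equals ⌈n/2⌉ − 1; otherwise it equals ⌈n/2⌉. -/
open SimpleGraph

section AuxIndNumCGraph

lemma auxC_mod_succ {a m : ℕ} (h : a < m) :
    (a+1) % m = a+1 ∧ a+1 < m ∨ (a+1) % m = 0 ∧ a + 1 = m := by
  rcases Nat.lt_or_ge (a+1) m with h'|h'
  · exact Or.inl ⟨Nat.mod_eq_of_lt h', h'⟩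
  · exact Or.inr ⟨by rw [show a+1 = m by omega, Nat.mod_self], by omega⟩

lemma auxC_card_filter_odd (k : ℕ) :
    ((Finset.range k).filter (fun i => i % 2 = 1)).card = k / 2 := by
  induction k with
  | zero => simp
  | succ n ih =>
    rw [Finset.range_add_one, Finset.filter_insert]
    by_cases h : n % 2 = 1
    · rw [if_pos h, Finset.card_insert_of_notMem (by simp)]
      omega
    · rw [if_neg h]; omega

lemma auxC_card_filter_even (k : ℕ) :
    ((Finset.range k).filter (fun i => i % 2 = 0)).card = (k+1) / 2 := by
  induction k with
  | zero => simp
  | succ n ih =>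
    rw [Finset.range_add_one, Finset.filter_insert]
    by_cases h : n % 2 = 0
    · rw [if_pos h, Finset.card_insert_of_notMem (by simp)]
      omega
    · rw [if_neg h]; omega

lemma auxC_card_fin_filter (k : ℕ) (p : ℕ → Prop) [DecidablePred p] :
    (Finset.univ.filter (fun i : Fin k => p i.val)).card
      = ((Finset.range k).filter p).card := by
  apply Finset.card_bij (fun i _ => i.val)
  · intro a ha
    simp only [Finset.mem_filter, Finset.mem_univ, true_and] at ha
    simp [ha, a.isLt]
  · intro a _ b _ h; exact Fin.val_injective h
  · intro b hb
    simp only [Finset.mem_filter, Finset.mem_range] at hb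
    exact ⟨⟨b, hb.1⟩, by simp [hb.2], rfl⟩

lemma auxC_card_fin_odd (k : ℕ) :
    (Finset.univ.filter (fun i : Fin k => i.val % 2 = 1)).card = k / 2 := by
  rw [auxC_card_fin_filter k (fun n => n % 2 = 1), auxC_card_filter_odd]

lemma auxC_card_fin_even (k : ℕ) :
    (Finset.univ.filter (fun i : Fin k => i.val % 2 = 0)).card = (k+1) / 2 := by
  rw [auxC_card_fin_filter k (fun n => n % 2 = 0), auxC_card_filter_even]

lemma auxC_upper (m q : ℕ) (hm : 3 ≤ m) (hq : 3 ≤ q)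
    (s : Finset (Fin m ⊕ Fin (q-1)))
    (hind : ∀ u ∈ s, ∀ v ∈ s, ¬ (CGraph m q).Adj u v) :
    s.card ≤ m / 2 + q / 2 := by
  classical
  set A : Finset ℕ := s.toLeft.image Fin.val with hA
  set B : Finset ℕ := s.toRight.image Fin.val with hB
  have hcard : s.card = A.card + B.card := by
    rw [hA, hB, Finset.card_image_of_injective _ Fin.val_injective,
      Finset.card_image_of_injective _ Fin.val_injective,
      Finset.card_toLeft_add_card_toRight]
  have hAmem : ∀ a ∈ A, a < m ∧ ∀ h : a < m, Sum.inl (⟨a, h⟩ : Fin m) ∈ s := by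
    intro a ha
    rw [hA, Finset.mem_image] at ha
    obtain ⟨i, hi, rfl⟩ := ha
    rw [Finset.mem_toLeft] at hi
    exact ⟨i.isLt, fun h => hi⟩
  have hBmem : ∀ b ∈ B, b < q - 1 ∧ ∀ h : b < q - 1, Sum.inr (⟨b, h⟩ : Fin (q-1)) ∈ s := by
    intro b hb
    rw [hB, Finset.mem_image] at hb
    obtain ⟨j, hj, rfl⟩ := hb
    rw [Finset.mem_toRight] at hj
    exact ⟨j.isLt, fun h => hj⟩
  have hA2 : 2 * A.card ≤ m := by
    set A' : Finset ℕ := A.image (fun a => (a+1) % m) with hA'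
    have hinj : Set.InjOn (fun a => (a+1) % m) A := by
      intro a ha b hb h
      obtain ⟨ham, -⟩ := hAmem a ha
      obtain ⟨hbm, -⟩ := hAmem b hb
      simp only at h
      rcases auxC_mod_succ ham with ⟨h1, _⟩ | ⟨h1, _⟩ <;>
        rcases auxC_mod_succ hbm with ⟨h2, _⟩ | ⟨h2, _⟩ <;> omega
    have hdisj : Disjoint A A' := by
      rw [Finset.disjoint_right]
      intro x hx hxA
      rw [hA', Finset.mem_image] at hx
      obtain ⟨a, ha, rfl⟩ := hx
      obtain ⟨ham, hams⟩ := hAmem a ha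
      obtain ⟨hxm, hxms⟩ := hAmem _ hxA
      refine hind _ (hams ham) _ (hxms hxm) ?_
      simp only [CGraph, SimpleGraph.fromRel_adj, ne_eq]
      constructor
      · intro hcon
        have : a = (a+1) % m := by
          simpa [Fin.ext_iff] using hcon
        rcases auxC_mod_succ ham with ⟨h1, _⟩ | ⟨h1, _⟩ <;> omega
      · exact Or.inl trivial
    have hsub : A ∪ A' ⊆ Finset.range m := by
      intro x hx
      rw [Finset.mem_union] at hx
      rw [Finset.mem_range]
      rcases hx with hx | hx
      · exact (hAmem x hx).1
      · rw [hA', Finset.mem_image] at hx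
        obtain ⟨a, ha, rfl⟩ := hx
        exact Nat.mod_lt _ (by omega)
    calc 2 * A.card = A.card + A'.card := by
          rw [hA', Finset.card_image_of_injOn hinj]; ring
      _ = (A ∪ A').card := (Finset.card_union_of_disjoint hdisj).symm
      _ ≤ (Finset.range m).card := Finset.card_le_card hsub
      _ = m := Finset.card_range m
  have hB2 : 2 * B.card ≤ q := by
    set B' : Finset ℕ := B.image (fun b => b + 1) with hB'
    have hdisj : Disjoint B B' := by
      rw [Finset.disjoint_right]
      intro x hx hxB
      rw [hB', Finset.mem_image] at hx
      obtain ⟨b, hb, rfl⟩ := hx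
      obtain ⟨hbm, hbms⟩ := hBmem b hb
      obtain ⟨hxm, hxms⟩ := hBmem _ hxB
      refine hind _ (hbms hbm) _ (hxms hxm) ?_
      simp only [CGraph, SimpleGraph.fromRel_adj, ne_eq]
      refine ⟨by simp [Fin.ext_iff], Or.inl trivial⟩
    have hsub : B ∪ B' ⊆ Finset.range q := by
      intro x hx
      rw [Finset.mem_union] at hx
      rw [Finset.mem_range]
      rcases hx with hx | hx
      · exact lt_of_lt_of_le (hBmem x hx).1 (by omega)
      · rw [hB', Finset.mem_image] at hx
        obtain ⟨b, hb, rfl⟩ := hx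
        have := (hBmem b hb).1
        omega
    calc 2 * B.card = B.card + B'.card := by
          rw [hB', Finset.card_image_of_injective _ (add_left_injective 1)]; ring
      _ = (B ∪ B').card := (Finset.card_union_of_disjoint hdisj).symm
      _ ≤ (Finset.range q).card := Finset.card_le_card hsub
      _ = q := Finset.card_range q
  omega

lemma auxC_key (m q : ℕ) (hm : 3 ≤ m) (hq : 3 ≤ q) :
    indNum (CGraph m q) = m / 2 + q / 2 := by
  classical
  set S : Set ℕ := {k | ∃ s : Finset (Fin m ⊕ Fin (q-1)),
      (∀ u ∈ s, ∀ v ∈ s, ¬ (CGraph m q).Adj u v) ∧ s.card = k} with hS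
  have hub : ∀ k ∈ S, k ≤ m / 2 + q / 2 := by
    rintro k ⟨s, hind, rfl⟩
    exact auxC_upper m q hm hq s hind
  have hne : S.Nonempty := ⟨0, ∅, by simp, by simp⟩
  -- explicit independent set
  set S₀ : Finset (Fin m ⊕ Fin (q-1)) :=
    (Finset.univ.filter (fun i : Fin m => i.val % 2 = 1)).image Sum.inl ∪
    (Finset.univ.filter (fun j : Fin (q-1) => j.val % 2 = 0)).image Sum.inr with hS₀
  have hmemS₀ : ∀ v, v ∈ S₀ ↔
      (∃ i : Fin m, i.val % 2 = 1 ∧ v = Sum.inl i) ∨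
      (∃ j : Fin (q-1), j.val % 2 = 0 ∧ v = Sum.inr j) := by
    intro v
    simp [hS₀, eq_comm]
  have hS₀card : S₀.card = m / 2 + q / 2 := by
    rw [hS₀, Finset.card_union_of_disjoint (by
      rw [Finset.disjoint_left]
      rintro a ha hb
      rw [Finset.mem_image] at ha hb
      obtain ⟨x, -, rfl⟩ := ha
      obtain ⟨y, -, hy⟩ := hb
      exact absurd hy (by simp))]
    rw [Finset.card_image_of_injective _ Sum.inl_injective,
        Finset.card_image_of_injective _ Sum.inr_injective,
        auxC_card_fin_odd, auxC_card_fin_even]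
    omega
  have hS₀ind : ∀ u ∈ S₀, ∀ v ∈ S₀, ¬ (CGraph m q).Adj u v := by
    intro u hu v hv hadj
    rw [hmemS₀] at hu hv
    rcases hu with ⟨i, hi, rfl⟩ | ⟨j, hj, rfl⟩ <;>
      rcases hv with ⟨i', hi', rfl⟩ | ⟨j', hj', rfl⟩
    · simp only [CGraph, SimpleGraph.fromRel_adj, ne_eq] at hadj
      obtain ⟨-, h⟩ := hadj
      rcases h with h | h
      · rcases auxC_mod_succ i.isLt with ⟨h1, _⟩ | ⟨h1, _⟩ <;> omega
      · rcases auxC_mod_succ i'.isLt with ⟨h1, _⟩ | ⟨h1, _⟩ <;> omega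
    · simp only [CGraph, SimpleGraph.fromRel_adj, ne_eq] at hadj
      obtain ⟨-, h⟩ := hadj
      simp only [or_false, false_or] at h
      omega
    · simp only [CGraph, SimpleGraph.fromRel_adj, ne_eq] at hadj
      obtain ⟨-, h⟩ := hadj
      simp only [or_false, false_or] at h
      omega
    · simp only [CGraph, SimpleGraph.fromRel_adj, ne_eq] at hadj
      obtain ⟨-, h⟩ := hadj
      omega
  have hmem : (m / 2 + q / 2) ∈ S := ⟨S₀, hS₀ind, hS₀card⟩
  have hbdd : BddAbove S := ⟨m / 2 + q / 2, fun k hk => hub k hk⟩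
  rw [indNum, ← hS]
  exact le_antisymm (csSup_le hne hub) (le_csSup hbdd hmem)

end AuxIndNumCGraph

/-- Let `m, q ≥ 3` be integers and let `n = m + q - 1` be the order of
`C(m,q)`.  If both `m` and `q` are odd, then `α(C(m,q)) = ⌈n/2⌉ - 1`; otherwise
`α(C(m,q)) = ⌈n/2⌉`.  (Here `⌈n/2⌉ = (n+1)/2` in natural-number arithmetic.) -/
theorem indNum_CGraph (m q : ℕ) (hm : 3 ≤ m) (hq : 3 ≤ q)
    (n : ℕ) (hn : n = m + q - 1) :
    ((Odd m ∧ Odd q) → indNum (CGraph m q) = (n + 1) / 2 - 1) ∧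
    (¬ (Odd m ∧ Odd q) → indNum (CGraph m q) = (n + 1) / 2) := by
  constructor
  · rintro ⟨⟨a, ha⟩, ⟨b, hb⟩⟩
    rw [auxC_key m q hm hq]
    omega
  · intro h
    rw [auxC_key m q hm hq]
    have h' : m % 2 = 0 ∨ q % 2 = 0 := by
      by_contra hc
      push_neg at hc
      exact h ⟨Nat.odd_iff.2 (by omega), Nat.odd_iff.2 (by omega)⟩
    omega
end

section
/- Let m, q ≥ 3 and p ≥ 1 be integers and let n = m + p + q − 1 be the order of B(m,p,q). If at least two of m, p, q are odd, then the independence number of B(m,p,q) equals ⌈n/2⌉ − 1; otherwise it equals ⌈n/2⌉. -/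
open SimpleGraph

section IndNumHelpers

private lemma modSuccEq (a m : ℕ) (ha : a < m) :
    (a + 1) % m = if a + 1 = m then 0 else a + 1 := by
  split
  · next h => rw [h, Nat.mod_self]
  · exact Nat.mod_eq_of_lt (by omega)

private lemma cycleBound (m : ℕ) (hm : 2 ≤ m) (A : Finset ℕ) (hA : ∀ a ∈ A, a < m)
    (hind : ∀ a ∈ A, ∀ b ∈ A, (a + 1) % m ≠ b) : A.card ≤ m / 2 := by
  set B := A.image (fun a => (a + 1) % m) with hB
  have hinj : Set.InjOn (fun a => (a + 1) % m) A := by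
    intro a ha b hb h
    have h1 := modSuccEq a m (hA a ha); have h2 := modSuccEq b m (hA b hb)
    simp only at h
    split at h1 <;> split at h2 <;> omega
  have hcard : B.card = A.card := Finset.card_image_of_injOn hinj
  have hdisj : Disjoint A B := by
    rw [Finset.disjoint_right]
    intro b hbB hbA
    rcases Finset.mem_image.mp hbB with ⟨a, haA, rfl⟩
    exact hind a haA _ hbA rfl
  have hsub : A ∪ B ⊆ Finset.range m := by
    intro x hx
    rcases Finset.mem_union.mp hx with h | h
    · exact Finset.mem_range.mpr (hA x h)
    · rcases Finset.mem_image.mp h with ⟨a, haA, rfl⟩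
      exact Finset.mem_range.mpr (Nat.mod_lt _ (by omega))
  have hle := Finset.card_le_card hsub
  rw [Finset.card_union_of_disjoint hdisj, hcard, Finset.card_range] at hle
  omega

private lemma pathBound (p : ℕ) (A : Finset ℕ) (hA : ∀ a ∈ A, a + 1 < p)
    (hind : ∀ a ∈ A, ∀ b ∈ A, a + 1 ≠ b) : A.card ≤ p / 2 := by
  set B := A.image (fun a => a + 1) with hB
  have hcard : B.card = A.card :=
    Finset.card_image_of_injective _ (fun a b h => by simpa using h)
  have hdisj : Disjoint A B := by
    rw [Finset.disjoint_right]
    intro b hbB hbA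
    rcases Finset.mem_image.mp hbB with ⟨a, haA, rfl⟩
    exact hind a haA _ hbA rfl
  have hsub : A ∪ B ⊆ Finset.range p := by
    intro x hx
    rcases Finset.mem_union.mp hx with h | h
    · exact Finset.mem_range.mpr (by have := hA x h; omega)
    · rcases Finset.mem_image.mp h with ⟨a, haA, rfl⟩
      exact Finset.mem_range.mpr (hA a haA)
  have hle := Finset.card_le_card hsub
  rw [Finset.card_union_of_disjoint hdisj, hcard, Finset.card_range] at hle
  omega

private lemma cardOdds (k : ℕ) :
    ((Finset.range k).filter (fun a => a % 2 = 1)).card = k / 2 := by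
  induction k with
  | zero => simp
  | succ n ih =>
    rw [Finset.range_add_one, Finset.filter_insert]
    by_cases h : n % 2 = 1
    · rw [if_pos h, Finset.card_insert_of_notMem (by simp)]
      omega
    · rw [if_neg h]; omega

private lemma cardEvens (k : ℕ) :
    ((Finset.range k).filter (fun a => a % 2 = 0)).card = (k + 1) / 2 := by
  induction k with
  | zero => simp
  | succ n ih =>
    rw [Finset.range_add_one, Finset.filter_insert]
    by_cases h : n % 2 = 0
    · rw [if_pos h, Finset.card_insert_of_notMem (by simp)]
      omega
    · rw [if_neg h]; omega

private lemma cardFinFilter (m : ℕ) (P : ℕ → Prop) [DecidablePred P] :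
    (Finset.univ.filter (fun i : Fin m => P i.val)).card
      = ((Finset.range m).filter P).card := by
  rw [← Finset.card_image_of_injective _ Fin.val_injective]
  congr 1
  ext a
  simp only [Finset.mem_image, Finset.mem_filter, Finset.mem_univ, true_and, Finset.mem_range]
  constructor
  · rintro ⟨i, hP, rfl⟩; exact ⟨i.isLt, hP⟩
  · rintro ⟨ha, hP⟩; exact ⟨⟨a, ha⟩, hP, rfl⟩

private lemma sumCardDecomp (m p q : ℕ) (S : Finset (Fin m ⊕ Fin (p - 1) ⊕ Fin q))
    [DecidableEq (Fin m ⊕ Fin (p - 1) ⊕ Fin q)] :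
    S.card = (Finset.univ.filter (fun i : Fin m => Sum.inl i ∈ S)).card
      + (Finset.univ.filter (fun i : Fin (p-1) => Sum.inr (Sum.inl i) ∈ S)).card
      + (Finset.univ.filter (fun i : Fin q => Sum.inr (Sum.inr i) ∈ S)).card := by
  classical
  set SA := (Finset.univ.filter (fun i : Fin m => Sum.inl i ∈ S)) with hSA
  set SB := (Finset.univ.filter (fun i : Fin (p-1) => Sum.inr (Sum.inl i) ∈ S)) with hSB
  set SC := (Finset.univ.filter (fun i : Fin q => Sum.inr (Sum.inr i) ∈ S)) with hSC
  have hdecomp : S = SA.image Sum.inl ∪ (SB.image (fun i => Sum.inr (Sum.inl i))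
      ∪ SC.image (fun i => Sum.inr (Sum.inr i))) := by
    ext v
    rcases v with i | i | i <;> simp [hSA, hSB, hSC]
  rw [hdecomp, Finset.card_union_of_disjoint, Finset.card_union_of_disjoint,
    Finset.card_image_of_injective _ Sum.inl_injective,
    Finset.card_image_of_injective _ (fun a b h => by simpa using h),
    Finset.card_image_of_injective _ (fun a b h => by simpa using h)]
  · ring
  · rw [Finset.disjoint_left]; rintro x hx hy
    simp only [Finset.mem_image] at hx hy
    obtain ⟨a, _, rfl⟩ := hx; obtain ⟨b, _, hb⟩ := hy; simp at hb
  · rw [Finset.disjoint_left]; rintro x hx hy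
    simp only [Finset.mem_image, Finset.mem_union] at hx hy
    obtain ⟨a, _, rfl⟩ := hx
    rcases hy with ⟨b, _, hb⟩ | ⟨b, _, hb⟩ <;> simp at hb

private lemma indepCardLe (m p q : ℕ) (hm : 3 ≤ m) (hq : 3 ≤ q) (hp : 1 ≤ p)
    (S : Finset (Fin m ⊕ Fin (p - 1) ⊕ Fin q))
    (hS : ∀ u ∈ S, ∀ v ∈ S, ¬ (BGraph m p q).Adj u v) :
    S.card ≤ m / 2 + p / 2 + q / 2 := by
  classical
  rw [sumCardDecomp m p q S]
  have hAdj : ∀ u v, (BGraph m p q).Adj u v ↔ u ≠ v ∧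
      ((match u, v with
        | Sum.inl i, Sum.inl j => (i.val + 1) % m = j.val
        | Sum.inr (Sum.inl i), Sum.inr (Sum.inl j) => i.val + 1 = j.val
        | Sum.inl i, Sum.inr (Sum.inl j) => i.val = 0 ∧ j.val = 0
        | Sum.inr (Sum.inl i), Sum.inr (Sum.inr j) => i.val = p - 2 ∧ j.val = 0
        | Sum.inl i, Sum.inr (Sum.inr j) => p = 1 ∧ i.val = 0 ∧ j.val = 0
        | Sum.inr (Sum.inr i), Sum.inr (Sum.inr j) => (i.val + 1) % q = j.val
        | _, _ => False) ∨
       (match v, u with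
        | Sum.inl i, Sum.inl j => (i.val + 1) % m = j.val
        | Sum.inr (Sum.inl i), Sum.inr (Sum.inl j) => i.val + 1 = j.val
        | Sum.inl i, Sum.inr (Sum.inl j) => i.val = 0 ∧ j.val = 0
        | Sum.inr (Sum.inl i), Sum.inr (Sum.inr j) => i.val = p - 2 ∧ j.val = 0
        | Sum.inl i, Sum.inr (Sum.inr j) => p = 1 ∧ i.val = 0 ∧ j.val = 0
        | Sum.inr (Sum.inr i), Sum.inr (Sum.inr j) => (i.val + 1) % q = j.val
        | _, _ => False)) := by
    intro u v; rw [BGraph, SimpleGraph.fromRel_adj]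
  have h1 : ((Finset.univ.filter (fun i : Fin m => Sum.inl i ∈ S)).image Fin.val).card
      ≤ m / 2 := by
    apply cycleBound m (by omega)
    · rintro a ha
      rcases Finset.mem_image.mp ha with ⟨i, hi, rfl⟩
      exact i.isLt
    · rintro a ha b hb hab
      rcases Finset.mem_image.mp ha with ⟨i, hi, rfl⟩
      rcases Finset.mem_image.mp hb with ⟨j, hj, rfl⟩
      have hiS : Sum.inl i ∈ S := (Finset.mem_filter.mp hi).2
      have hjS : Sum.inl j ∈ S := (Finset.mem_filter.mp hj).2
      have hne : i ≠ j := by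
        rintro rfl
        have := modSuccEq i.val m i.isLt
        split at this <;> omega
      exact hS _ hiS _ hjS ((hAdj _ _).mpr ⟨by simpa using hne, Or.inl hab⟩)
  have h2 : ((Finset.univ.filter (fun i : Fin (p-1) => Sum.inr (Sum.inl i) ∈ S)).image
      Fin.val).card ≤ p / 2 := by
    apply pathBound p
    · rintro a ha
      rcases Finset.mem_image.mp ha with ⟨i, hi, rfl⟩
      have := i.isLt; omega
    · rintro a ha b hb hab
      rcases Finset.mem_image.mp ha with ⟨i, hi, rfl⟩
      rcases Finset.mem_image.mp hb with ⟨j, hj, rfl⟩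
      have hiS : Sum.inr (Sum.inl i) ∈ S := (Finset.mem_filter.mp hi).2
      have hjS : Sum.inr (Sum.inl j) ∈ S := (Finset.mem_filter.mp hj).2
      have hne : i ≠ j := by
        rintro rfl; omega
      exact hS _ hiS _ hjS ((hAdj _ _).mpr ⟨by simpa using hne, Or.inl hab⟩)
  have h3 : ((Finset.univ.filter (fun i : Fin q => Sum.inr (Sum.inr i) ∈ S)).image
      Fin.val).card ≤ q / 2 := by
    apply cycleBound q (by omega)
    · rintro a ha
      rcases Finset.mem_image.mp ha with ⟨i, hi, rfl⟩
      exact i.isLt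
    · rintro a ha b hb hab
      rcases Finset.mem_image.mp ha with ⟨i, hi, rfl⟩
      rcases Finset.mem_image.mp hb with ⟨j, hj, rfl⟩
      have hiS : Sum.inr (Sum.inr i) ∈ S := (Finset.mem_filter.mp hi).2
      have hjS : Sum.inr (Sum.inr j) ∈ S := (Finset.mem_filter.mp hj).2
      have hne : i ≠ j := by
        rintro rfl
        have := modSuccEq i.val q i.isLt
        split at this <;> omega
      exact hS _ hiS _ hjS ((hAdj _ _).mpr ⟨by simpa using hne, Or.inl hab⟩)
  rw [Finset.card_image_of_injective _ Fin.val_injective] at h1 h2 h3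
  omega

private lemma indepLower (m p q : ℕ) (hm : 3 ≤ m) (hq : 3 ≤ q) (hp : 1 ≤ p) :
    ∃ S : Finset (Fin m ⊕ Fin (p - 1) ⊕ Fin q),
      (∀ u ∈ S, ∀ v ∈ S, ¬ (BGraph m p q).Adj u v) ∧
      S.card = m / 2 + p / 2 + q / 2 := by
  classical
  set SA := (Finset.univ.filter (fun i : Fin m => i.val % 2 = 1)) with hSA
  set SB := (Finset.univ.filter (fun i : Fin (p-1) => i.val % 2 = 0)) with hSB
  set SC := (Finset.univ.filter (fun i : Fin q => i.val % 2 = 1)) with hSC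
  refine ⟨SA.image Sum.inl ∪ (SB.image (fun i => Sum.inr (Sum.inl i))
      ∪ SC.image (fun i => Sum.inr (Sum.inr i))), ?_, ?_⟩
  · intro u hu v hv hadj
    rw [BGraph, SimpleGraph.fromRel_adj] at hadj
    obtain ⟨hne, hrel⟩ := hadj
    rcases u with i | i | i <;> rcases v with j | j | j <;>
      simp only [hSA, hSB, hSC, Finset.mem_union, Finset.mem_image, Finset.mem_filter,
        Finset.mem_univ, true_and, Sum.inl.injEq, Sum.inr.injEq, exists_eq_right,
        reduceCtorEq, exists_false, false_or, or_false, and_false, false_and] at hu hv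
    · -- inl inl
      replace hrel : ((i.val + 1) % m = j.val) ∨ ((j.val + 1) % m = i.val) := hrel
      have hi := i.isLt; have hj := j.isLt
      rcases hrel with h | h
      · have := modSuccEq i.val m hi; split at this <;> omega
      · have := modSuccEq j.val m hj; split at this <;> omega
    · replace hrel : (i.val = 0 ∧ j.val = 0) ∨ False := hrel
      rcases hrel with h | h
      · omega
      · exact h
    · replace hrel : (p = 1 ∧ i.val = 0 ∧ j.val = 0) ∨ False := hrel
      rcases hrel with h | h
      · omega
      · exact h
    · replace hrel : False ∨ (j.val = 0 ∧ i.val = 0) := hrel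
      rcases hrel with h | h
      · exact h
      · omega
    · replace hrel : (i.val + 1 = j.val) ∨ (j.val + 1 = i.val) := hrel
      rcases hrel with h | h <;> omega
    · replace hrel : (i.val = p - 2 ∧ j.val = 0) ∨ False := hrel
      rcases hrel with h | h
      · omega
      · exact h
    · replace hrel : False ∨ (p = 1 ∧ j.val = 0 ∧ i.val = 0) := hrel
      rcases hrel with h | h
      · exact h
      · omega
    · replace hrel : False ∨ (j.val = p - 2 ∧ i.val = 0) := hrel
      rcases hrel with h | h
      · exact h
      · omega
    · replace hrel : ((i.val + 1) % q = j.val) ∨ ((j.val + 1) % q = i.val) := hrel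
      have hi := i.isLt; have hj := j.isLt
      rcases hrel with h | h
      · have := modSuccEq i.val q hi; split at this <;> omega
      · have := modSuccEq j.val q hj; split at this <;> omega
  · rw [Finset.card_union_of_disjoint, Finset.card_union_of_disjoint,
      Finset.card_image_of_injective _ Sum.inl_injective,
      Finset.card_image_of_injective _ (fun a b h => by simpa using h),
      Finset.card_image_of_injective _ (fun a b h => by simpa using h)]
    · have e1 : SA.card = m / 2 := by
        rw [hSA, cardFinFilter m (fun a => a % 2 = 1), cardOdds]
      have e2 : SB.card = p / 2 := by
        rw [hSB, cardFinFilter (p-1) (fun a => a % 2 = 0), cardEvens]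
        omega
      have e3 : SC.card = q / 2 := by
        rw [hSC, cardFinFilter q (fun a => a % 2 = 1), cardOdds]
      omega
    · rw [Finset.disjoint_left]; rintro x hx hy
      simp only [Finset.mem_image] at hx hy
      obtain ⟨a, _, rfl⟩ := hx; obtain ⟨b, _, hb⟩ := hy; simp at hb
    · rw [Finset.disjoint_left]; rintro x hx hy
      simp only [Finset.mem_image, Finset.mem_union] at hx hy
      obtain ⟨a, _, rfl⟩ := hx
      rcases hy with ⟨b, _, hb⟩ | ⟨b, _, hb⟩ <;> simp at hb

end IndNumHelpers

/-- Let `m, q ≥ 3` and `p ≥ 1` be integers and let `n = m + p + q - 1`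
be the order of `B(m,p,q)`.  If at least two of `m, p, q` are odd, then
`α(B(m,p,q)) = ⌈n/2⌉ - 1`; otherwise `α(B(m,p,q)) = ⌈n/2⌉`.
(Here `⌈n/2⌉ = (n+1)/2` in natural-number arithmetic.) -/
theorem indNum_BGraph (m p q : ℕ) (hm : 3 ≤ m) (hq : 3 ≤ q) (hp : 1 ≤ p)
    (n : ℕ) (hn : n = m + p + q - 1) :
    (((Odd m ∧ Odd p) ∨ (Odd m ∧ Odd q) ∨ (Odd p ∧ Odd q)) →
      indNum (BGraph m p q) = (n + 1) / 2 - 1) ∧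
    (¬ ((Odd m ∧ Odd p) ∨ (Odd m ∧ Odd q) ∨ (Odd p ∧ Odd q)) →
      indNum (BGraph m p q) = (n + 1) / 2) := by
  classical
  have key : indNum (BGraph m p q) = m / 2 + p / 2 + q / 2 := by
    unfold indNum
    apply le_antisymm
    · apply csSup_le
      · exact ⟨0, ∅, by simp, by simp⟩
      rintro k ⟨s, hs, rfl⟩
      exact indepCardLe m p q hm hq hp s hs
    · obtain ⟨S, hS, hcard⟩ := indepLower m p q hm hq hp
      apply le_csSup
      · refine ⟨Fintype.card (Fin m ⊕ Fin (p-1) ⊕ Fin q), ?_⟩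
        rintro k ⟨s, _, rfl⟩
        exact Finset.card_le_univ s
      · exact ⟨S, hS, hcard⟩
  subst hn
  constructor <;> intro h <;> rw [key] <;>
    simp only [Nat.odd_iff] at h <;> omega
end

section
/- Let n ≥ 7 be an integer with n ≡ 0 (mod 6) and set k = ⌈n/3⌉. If a connected simple graph G of order n contains a subgraph isomorphic to C(m, q) for some integers m, q ≥ 3, then ρ(G) > ρ(B(k+1, k−1, k+1)). -/
open SimpleGraph

/-! ### Auxiliary spectral lemmas -/

open Matrix Finset SimpleGraph in
lemma eig_of_spec' {V : Type} [Fintype V] [DecidableEq V] (A : Matrix V V ℝ) (μ : ℝ)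
    (h : μ ∈ spectrum ℝ A) : ∃ x : V → ℝ, x ≠ 0 ∧ A.mulVec x = μ • x := by
  rw [← AlgEquiv.spectrum_eq (Matrix.toLinAlgEquiv' (R := ℝ) (n := V)),
    ← Module.End.hasEigenvalue_iff_mem_spectrum] at h
  obtain ⟨x, hx⟩ := h.exists_hasEigenvector
  exact ⟨x, hx.2, by simpa [Matrix.toLinAlgEquiv'_apply, Matrix.toLin'_apply] using hx.apply_eq_smul⟩

open Matrix Finset in
lemma collatz_upper' {V : Type} [Fintype V] [DecidableEq V] (A : Matrix V V ℝ)
    (hA : ∀ i j, 0 ≤ A i j) (g : V → ℝ) (hg : ∀ i, 0 < g i) (lam : ℝ)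
    (h : ∀ i, (A.mulVec g) i ≤ lam * g i) : ∀ μ ∈ spectrum ℝ A, μ ≤ lam := by
  intro μ hμ
  obtain ⟨x, hx0, hx⟩ := eig_of_spec' A μ hμ
  have hne : (Finset.univ : Finset V).Nonempty := by
    by_contra hemp
    rw [Finset.not_nonempty_iff_eq_empty] at hemp
    apply hx0; ext i
    exact absurd (Finset.mem_univ i) (by simp [hemp])
  obtain ⟨i₀, -, hmax⟩ := Finset.exists_max_image Finset.univ (fun i => |x i| / g i) hne
  set c := |x i₀| / g i₀ with hc
  have hcj : ∀ j, |x j| ≤ c * g j := by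
    intro j
    have := hmax j (Finset.mem_univ j)
    rw [div_le_div_iff₀ (hg j) (hg i₀)] at this
    rw [hc, div_mul_eq_mul_div, le_div_iff₀ (hg i₀)]
    linarith
  have hcpos : 0 < c := by
    rcases Function.ne_iff.1 hx0 with ⟨j, hj⟩
    have h1 : 0 < |x j| / g j := div_pos (abs_pos.2 hj) (hg j)
    exact lt_of_lt_of_le h1 (hmax j (Finset.mem_univ j))
  have hxi₀ : |x i₀| = c * g i₀ := by
    rw [hc, div_mul_eq_mul_div, mul_div_assoc, div_self (ne_of_gt (hg i₀)), mul_one]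
  have key : |μ| * |x i₀| ≤ c * (lam * g i₀) := by
    have h1 : |μ| * |x i₀| = |(A.mulVec x) i₀| := by
      rw [hx]; simp [abs_mul]
    rw [h1]
    have h2 : |(A.mulVec x) i₀| ≤ ∑ j, A i₀ j * |x j| := by
      refine (Finset.abs_sum_le_sum_abs _ _).trans ?_
      exact Finset.sum_le_sum fun j _ => by
        rw [abs_mul, abs_of_nonneg (hA i₀ j)]
    refine h2.trans ?_
    have h3 : ∑ j, A i₀ j * |x j| ≤ ∑ j, A i₀ j * (c * g j) :=
      Finset.sum_le_sum fun j _ => mul_le_mul_of_nonneg_left (hcj j) (hA i₀ j)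
    refine h3.trans ?_
    have h4 : ∑ j, A i₀ j * (c * g j) = c * (A.mulVec g) i₀ := by
      simp only [Matrix.mulVec, dotProduct, Finset.mul_sum]
      exact Finset.sum_congr rfl fun j _ => by ring
    rw [h4]
    exact mul_le_mul_of_nonneg_left (h i₀) (le_of_lt hcpos)
  rw [hxi₀] at key
  have hgi : 0 < g i₀ := hg i₀
  have habs : |μ| ≤ lam := by
    nlinarith [mul_pos hcpos hgi]
  exact (le_abs_self μ).trans habs

open Matrix Finset in
lemma rayleigh_le_sSup' {V : Type} [Fintype V] [DecidableEq V] (A : Matrix V V ℝ)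
    (hA : A.IsHermitian) (hbdd : BddAbove (spectrum ℝ A)) (x : V → ℝ) :
    x ⬝ᵥ A.mulVec x ≤ sSup (spectrum ℝ A) * (x ⬝ᵥ x) := by
  classical
  set U : Matrix V V ℝ := (hA.eigenvectorUnitary : Matrix V V ℝ) with hU
  set d : V → ℝ := hA.eigenvalues with hd
  have hspec : A = U * diagonal (RCLike.ofReal ∘ d) * star U := hA.spectral_theorem
  have hdiag : diagonal (RCLike.ofReal ∘ d) = diagonal d := by
    congr 1
  set c : V → ℝ := star U *ᵥ x with hc
  have hvecmul : x ᵥ* U = c := by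
    ext i
    simp [hc, Matrix.vecMul, Matrix.mulVec, dotProduct, conjTranspose_apply, mul_comm]
  have h1 : x ⬝ᵥ A.mulVec x = ∑ i, d i * c i ^ 2 := by
    rw [hspec, hdiag, ← Matrix.mulVec_mulVec, ← Matrix.mulVec_mulVec,
      Matrix.dotProduct_mulVec, hvecmul]
    simp [dotProduct, Matrix.mulVec_diagonal]
    exact Finset.sum_congr rfl fun i _ => by ring
  have h2 : x ⬝ᵥ x = ∑ i, c i ^ 2 := by
    have hUU : U * star U = 1 := Matrix.mem_unitaryGroup_iff.mp hA.eigenvectorUnitary.2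
    have hcc : c ⬝ᵥ c = x ⬝ᵥ x := by
      have h5 : star U *ᵥ x = x ᵥ* U := hvecmul.symm
      show (star U *ᵥ x) ⬝ᵥ (star U *ᵥ x) = x ⬝ᵥ x
      rw [Matrix.dotProduct_mulVec, h5, Matrix.vecMul_vecMul, hUU, Matrix.vecMul_one]
    rw [← hcc]
    simp [dotProduct]
    exact Finset.sum_congr rfl fun i _ => by ring
  rw [h1, h2, Finset.mul_sum]
  refine Finset.sum_le_sum fun i _ => ?_
  have hmem : d i ∈ spectrum ℝ A := hA.eigenvalues_mem_spectrum_real i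
  exact mul_le_mul_of_nonneg_right (le_csSup hbdd hmem) (sq_nonneg _)

lemma specRad_eq' {V : Type} [Fintype V] [DecidableEq V] (G : SimpleGraph V)
    [inst : DecidableRel G.Adj] :
    specRad G = sSup (spectrum ℝ (G.adjMatrix ℝ)) := by
  unfold specRad
  congr!

/-! ### neighbour-sum helpers -/

section helpers
open Matrix Finset SimpleGraph
variable {V : Type} [Fintype V] [DecidableEq V] (G : SimpleGraph V) [DecidableRel G.Adj]

lemma nbr_sum_two (g : V → ℝ) (v a b : V) (hab : a ≠ b)
    (hchar : ∀ u, G.Adj v u ↔ (u = a ∨ u = b)) :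
    (G.adjMatrix ℝ *ᵥ g) v = g a + g b := by
  rw [SimpleGraph.adjMatrix_mulVec_apply]
  have h : G.neighborFinset v = {a, b} := by
    ext u; simp [SimpleGraph.mem_neighborFinset, hchar]
  rw [h, Finset.sum_insert (by simp [hab]), Finset.sum_singleton]

lemma nbr_sum_three (g : V → ℝ) (v a b c : V) (hab : a ≠ b) (hac : a ≠ c) (hbc : b ≠ c)
    (hchar : ∀ u, G.Adj v u ↔ (u = a ∨ u = b ∨ u = c)) :
    (G.adjMatrix ℝ *ᵥ g) v = g a + g b + g c := by
  rw [SimpleGraph.adjMatrix_mulVec_apply]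
  have h : G.neighborFinset v = {a, b, c} := by
    ext u; simp [SimpleGraph.mem_neighborFinset, hchar]
  rw [h, Finset.sum_insert (by simp [hab, hac]), Finset.sum_insert (by simp [hbc]),
    Finset.sum_singleton, add_assoc]

lemma nbr_lower_two (x : V → ℝ) (hx : ∀ u, 0 ≤ x u) (v a b : V) (hab : a ≠ b)
    (ha : G.Adj v a) (hb : G.Adj v b) :
    x a + x b ≤ (G.adjMatrix ℝ *ᵥ x) v := by
  rw [SimpleGraph.adjMatrix_mulVec_apply]
  have hsub : ({a, b} : Finset V) ⊆ G.neighborFinset v := by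
    intro u hu
    simp only [Finset.mem_insert, Finset.mem_singleton] at hu
    rcases hu with rfl | rfl <;> simp [SimpleGraph.mem_neighborFinset, ha, hb]
  calc x a + x b = ∑ u ∈ ({a, b} : Finset V), x u := by
        rw [Finset.sum_insert (by simp [hab]), Finset.sum_singleton]
    _ ≤ _ := Finset.sum_le_sum_of_subset_of_nonneg hsub (fun u _ _ => hx u)

lemma nbr_lower_four (x : V → ℝ) (hx : ∀ u, 0 ≤ x u) (v a b c d : V)
    (hab : a ≠ b) (hac : a ≠ c) (had : a ≠ d) (hbc : b ≠ c) (hbd : b ≠ d) (hcd : c ≠ d)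
    (ha : G.Adj v a) (hb : G.Adj v b) (hc : G.Adj v c) (hd : G.Adj v d) :
    x a + x b + x c + x d ≤ (G.adjMatrix ℝ *ᵥ x) v := by
  rw [SimpleGraph.adjMatrix_mulVec_apply]
  have hsub : ({a, b, c, d} : Finset V) ⊆ G.neighborFinset v := by
    intro u hu
    simp only [Finset.mem_insert, Finset.mem_singleton] at hu
    rcases hu with rfl | rfl | rfl | rfl <;>
      simp [SimpleGraph.mem_neighborFinset, ha, hb, hc, hd]
  calc x a + x b + x c + x d = ∑ u ∈ ({a, b, c, d} : Finset V), x u := by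
        rw [Finset.sum_insert (by simp [hab, hac, had]),
          Finset.sum_insert (by simp [hbc, hbd]), Finset.sum_insert (by simp [hcd]),
          Finset.sum_singleton]; ring
    _ ≤ _ := Finset.sum_le_sum_of_subset_of_nonneg hsub (fun u _ _ => hx u)

end helpers


/-! ### profiles and certificates -/
open Matrix Finset SimpleGraph

noncomputable def ccp : ℕ → ℝ := fun d => if d = 0 then 1 else (37/50) * (39/50)^(d-1)
noncomputable def cpp : ℕ → ℝ := fun d => if d = 0 then 1 else (4/5) * (39/50)^(d-1)
lemma ccp_pos (d : ℕ) : 0 < ccp d := by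
  unfold ccp; split <;> positivity

lemma cpp_pos (d : ℕ) : 0 < cpp d := by
  unfold cpp; split <;> positivity

lemma Ljunction : ccp 1 + ccp 1 + cpp 1 ≤ 229/100 := by
  unfold ccp cpp; norm_num

lemma Lcp_one_deep : cpp 0 + cpp 2 ≤ (229/100) * cpp 1 := by
  unfold cpp; norm_num

lemma Lcp_one_peak : cpp 0 + cpp 1 ≤ (229/100) * cpp 1 := by
  unfold cpp; norm_num



lemma Lcc_one : ccp 0 + ccp 2 ≤ (229/100) * ccp 1 := by unfold ccp; norm_num
lemma Lcc_mid (e : ℕ) : ccp (e+1) + ccp (e+3) ≤ (229/100) * ccp (e+2) := by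
  unfold ccp
  simp only [Nat.succ_ne_zero, if_false]
  repeat rw [show ∀ a:ℕ, a+1-1 = a from fun _ => rfl]
  have he : (0:ℝ) < (39/50)^e := by positivity
  have h1 : (39/50:ℝ)^(e+2) = (39/50)^e * (39/50)^2 := by ring
  have h2 : (39/50:ℝ)^(e+1) = (39/50)^e * (39/50) := by ring
  nlinarith [he]
lemma Lcc_peak (e : ℕ) : ccp (e+1) + ccp (e+2) ≤ (229/100) * ccp (e+2) := by
  unfold ccp
  simp only [Nat.succ_ne_zero, if_false]
  repeat rw [show ∀ a:ℕ, a+1-1 = a from fun _ => rfl]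
  have he : (0:ℝ) < (39/50)^e := by positivity
  have h2 : (39/50:ℝ)^(e+1) = (39/50)^e * (39/50) := by ring
  nlinarith [he]
lemma Lcp_mid (e : ℕ) : cpp (e+1) + cpp (e+3) ≤ (229/100) * cpp (e+2) := by
  unfold cpp
  simp only [Nat.succ_ne_zero, if_false]
  repeat rw [show ∀ a:ℕ, a+1-1 = a from fun _ => rfl]
  have he : (0:ℝ) < (39/50)^e := by positivity
  have h1 : (39/50:ℝ)^(e+2) = (39/50)^e * (39/50)^2 := by ring
  have h2 : (39/50:ℝ)^(e+1) = (39/50)^e * (39/50) := by ring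
  nlinarith [he]
lemma Lcp_peak (e : ℕ) : cpp (e+1) + cpp (e+2) ≤ (229/100) * cpp (e+2) := by
  unfold cpp
  simp only [Nat.succ_ne_zero, if_false]
  repeat rw [show ∀ a:ℕ, a+1-1 = a from fun _ => rfl]
  have he : (0:ℝ) < (39/50)^e := by positivity
  have h2 : (39/50:ℝ)^(e+1) = (39/50)^e * (39/50) := by ring
  nlinarith [he]

lemma cyc_two_bound (k i : ℕ) (hk : 4 ≤ k) (hke : k % 2 = 0) (h1 : 1 ≤ i) (h2 : i ≤ k) :
    ccp (min (i-1) (k+1-(i-1))) + ccp (min (i+1) (k+1-(i+1))) ≤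
      (229/100) * ccp (min i (k+1-i)) := by
  set K2 := k / 2 with hK2
  rcases Nat.lt_or_ge i 2 with hi1 | hi2
  · -- i = 1
    have e1 : min (i-1) (k+1-(i-1)) = 0 := by omega
    have e2 : min (i+1) (k+1-(i+1)) = 2 := by omega
    have e3 : min i (k+1-i) = 1 := by omega
    rw [e1, e2, e3]; exact Lcc_one
  rcases Nat.lt_or_ge i K2 with him | hge
  · -- 2 ≤ i ≤ K2 - 1 : mid, d = i
    obtain ⟨e, rfl⟩ : ∃ e, i = e + 2 := ⟨i - 2, by omega⟩
    have e1 : min (e+2-1) (k+1-(e+2-1)) = e+1 := by omega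
    have e2 : min (e+2+1) (k+1-(e+2+1)) = e+3 := by omega
    have e3 : min (e+2) (k+1-(e+2)) = e+2 := by omega
    rw [e1, e2, e3]; exact Lcc_mid e
  rcases Nat.lt_or_ge i (K2+1) with hpk | hge2
  · -- i = K2 : peak
    obtain ⟨e, he⟩ : ∃ e, K2 = e + 2 := ⟨K2 - 2, by omega⟩
    have e1 : min (i-1) (k+1-(i-1)) = e+1 := by omega
    have e2 : min (i+1) (k+1-(i+1)) = e+2 := by omega
    have e3 : min i (k+1-i) = e+2 := by omega
    rw [e1, e2, e3]; exact Lcc_peak e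
  rcases Nat.lt_or_ge i (K2+2) with hpk2 | hge3
  · -- i = K2+1 : peak (mirrored)
    obtain ⟨e, he⟩ : ∃ e, K2 = e + 2 := ⟨K2 - 2, by omega⟩
    have e1 : min (i-1) (k+1-(i-1)) = e+2 := by omega
    have e2 : min (i+1) (k+1-(i+1)) = e+1 := by omega
    have e3 : min i (k+1-i) = e+2 := by omega
    rw [e1, e2, e3, add_comm]; exact Lcc_peak e
  rcases Nat.lt_or_ge i k with hlt | hik
  · -- K2+2 ≤ i ≤ k-1 : mid mirrored, d = k+1-i ∈ [2, K2-1]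
    obtain ⟨e, he⟩ : ∃ e, k+1-i = e + 2 := ⟨k-1-i, by omega⟩
    have e1 : min (i-1) (k+1-(i-1)) = e+3 := by omega
    have e2 : min (i+1) (k+1-(i+1)) = e+1 := by omega
    have e3 : min i (k+1-i) = e+2 := by omega
    rw [e1, e2, e3, add_comm]; exact Lcc_mid e
  · -- i = k
    have e1 : min (i-1) (k+1-(i-1)) = 2 := by omega
    have e2 : min (i+1) (k+1-(i+1)) = 0 := by omega
    have e3 : min i (k+1-i) = 1 := by omega
    rw [e1, e2, e3, add_comm]; exact Lcc_one

lemma path_two_bound (k pos : ℕ) (hk : 6 ≤ k) (hke : k % 2 = 0) (h1 : 2 ≤ pos)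
    (h2 : pos ≤ k-3) :
    cpp (min (pos-1) (k-1-(pos-1))) + cpp (min (pos+1) (k-1-(pos+1))) ≤
      (229/100) * cpp (min pos (k-1-pos)) := by
  set E := (k-2) / 2 with hE
  rcases Nat.lt_or_ge pos E with hmid | hge
  · obtain ⟨e, rfl⟩ : ∃ e, pos = e + 2 := ⟨pos - 2, by omega⟩
    have e1 : min (e+2-1) (k-1-(e+2-1)) = e+1 := by omega
    have e2 : min (e+2+1) (k-1-(e+2+1)) = e+3 := by omega
    have e3 : min (e+2) (k-1-(e+2)) = e+2 := by omega
    rw [e1, e2, e3]; exact Lcp_mid e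
  rcases Nat.lt_or_ge pos (E+1) with hpk | hge2
  · obtain ⟨e, he⟩ : ∃ e, E = e + 2 := ⟨E - 2, by omega⟩
    have e1 : min (pos-1) (k-1-(pos-1)) = e+1 := by omega
    have e2 : min (pos+1) (k-1-(pos+1)) = e+2 := by omega
    have e3 : min pos (k-1-pos) = e+2 := by omega
    rw [e1, e2, e3]; exact Lcp_peak e
  rcases Nat.lt_or_ge pos (E+2) with hpk2 | hge3
  · obtain ⟨e, he⟩ : ∃ e, E = e + 2 := ⟨E - 2, by omega⟩
    have e1 : min (pos-1) (k-1-(pos-1)) = e+2 := by omega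
    have e2 : min (pos+1) (k-1-(pos+1)) = e+1 := by omega
    have e3 : min pos (k-1-pos) = e+2 := by omega
    rw [e1, e2, e3, add_comm]; exact Lcp_peak e
  · obtain ⟨e, he⟩ : ∃ e, k-1-pos = e + 2 := ⟨k-3-pos, by omega⟩
    have e1 : min (pos-1) (k-1-(pos-1)) = e+3 := by omega
    have e2 : min (pos+1) (k-1-(pos+1)) = e+1 := by omega
    have e3 : min pos (k-1-pos) = e+2 := by omega
    rw [e1, e2, e3, add_comm]; exact Lcp_mid e

lemma modsucc {a b m : ℕ} (ha : a < m) (hb : b < m) :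
    ((a+1) % m = b) ↔ ((a+1 = m ∧ b = 0) ∨ (a+1 < m ∧ b = a+1)) := by
  rcases Nat.lt_or_ge (a+1) m with h | h
  · rw [Nat.mod_eq_of_lt h]; omega
  · have hm : m = a + 1 := by omega
    subst hm; simp [Nat.mod_self]; omega

noncomputable def gB (k : ℕ) : Fin (k+1) ⊕ Fin (k-1-1) ⊕ Fin (k+1) → ℝ := fun v =>
  match v with
  | Sum.inl i => ccp (min i.val (k+1 - i.val))
  | Sum.inr (Sum.inl a) => cpp (min (a.val+1) (k-1-(a.val+1)))
  | Sum.inr (Sum.inr j) => ccp (min j.val (k+1 - j.val))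

lemma gB_pos (k : ℕ) (v : Fin (k+1) ⊕ Fin (k-1-1) ⊕ Fin (k+1)) : 0 < gB k v := by
  rcases v with i | a | j
  · exact ccp_pos _
  · exact cpp_pos _
  · exact ccp_pos _


noncomputable instance decB (m p q : ℕ) : DecidableRel (BGraph m p q).Adj :=
  Classical.decRel _

lemma B_cert (k : ℕ) (hk : 4 ≤ k) (hke : k % 2 = 0) :
    ∀ v, ((BGraph (k+1) (k-1) (k+1)).adjMatrix ℝ *ᵥ gB k) v ≤ (229/100) * gB k v := by
  have hk2 : 2 ≤ k - 1 - 1 := by omega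
  intro v
  rcases v with i | a | j
  · -- first cycle
    rcases Nat.eq_zero_or_pos i.val with hi0 | hipos
    · -- junction u₀
      rw [nbr_sum_three _ (gB k) _ (Sum.inl ⟨1, by omega⟩) (Sum.inl ⟨k, by omega⟩)
          (Sum.inr (Sum.inl ⟨0, by omega⟩))
          (by simp only [ne_eq, Sum.inl.injEq, Fin.mk.injEq]; omega) (by simp) (by simp)]
      · have e1 : gB k (Sum.inl (⟨1, by omega⟩ : Fin (k+1))) = ccp 1 := by
          show ccp (min 1 (k+1-1)) = ccp 1; congr 1; omega
        have e2 : gB k (Sum.inl (⟨k, by omega⟩ : Fin (k+1))) = ccp 1 := by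
          show ccp (min k (k+1-k)) = ccp 1; congr 1; omega
        have e3 : gB k (Sum.inr (Sum.inl (⟨0, by omega⟩ : Fin (k-1-1)))) = cpp 1 := by
          show cpp (min (0+1) (k-1-(0+1))) = cpp 1; congr 1; omega
        have e4 : gB k (Sum.inl i) = 1 := by
          show ccp (min i.val (k+1-i.val)) = 1
          rw [show min i.val (k+1-i.val) = 0 by omega]
          unfold ccp; simp
        rw [e1, e2, e3, e4, mul_one]; exact Ljunction
      · -- characterization
        intro u
        rcases u with j' | b' | c'
        · rw [BGraph, SimpleGraph.fromRel_adj]; dsimp only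
          rw [modsucc i.isLt j'.isLt, modsucc j'.isLt i.isLt]
          simp only [ne_eq, Sum.inl.injEq, Sum.inr.injEq, Fin.ext_iff, Fin.mk.injEq,
            reduceCtorEq, or_false, false_or, not_false_iff, and_true, true_and]
          omega
        · rw [BGraph, SimpleGraph.fromRel_adj]; dsimp only
          simp only [ne_eq, Sum.inl.injEq, Sum.inr.injEq, Fin.ext_iff, Fin.mk.injEq,
            reduceCtorEq, or_false, false_or, not_false_iff, and_true, true_and]
          omega
        · refine iff_of_false ?_ (by simp)
          rw [BGraph, SimpleGraph.fromRel_adj]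
          rintro ⟨-, h | h⟩
          · exact absurd h.1 (by omega)
          · exact h
    · -- non-junction cycle vertex, 1 ≤ i.val ≤ k
      have hile : i.val ≤ k := by omega
      have hsucc : (i.val+1) % (k+1) = if i.val = k then 0 else i.val + 1 := by
        split_ifs with h
        · rw [h]; simp [Nat.mod_self]
        · exact Nat.mod_eq_of_lt (by omega)
      rw [nbr_sum_two _ (gB k) _ (Sum.inl ⟨i.val - 1, by omega⟩)
          (Sum.inl ⟨(i.val + 1) % (k+1), Nat.mod_lt _ (by omega)⟩)
          (by simp only [ne_eq, Sum.inl.injEq, Fin.mk.injEq]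
              rw [hsucc]; split_ifs <;> omega)]
      · have e1 : gB k (Sum.inl (⟨i.val - 1, by omega⟩ : Fin (k+1)))
            = ccp (min (i.val-1) (k+1-(i.val-1))) := rfl
        have e2 : gB k (Sum.inl (⟨(i.val + 1) % (k+1), Nat.mod_lt _ (by omega)⟩ : Fin (k+1)))
            = ccp (min (i.val+1) (k+1-(i.val+1))) := by
          show ccp (min ((i.val+1) % (k+1)) (k+1-((i.val+1) % (k+1)))) = _
          rw [hsucc]; split_ifs with h
          · congr 1; omega
          · rfl
        have e3 : gB k (Sum.inl i) = ccp (min i.val (k+1-i.val)) := rfl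
        rw [e1, e2, e3]
        exact cyc_two_bound k i.val hk hke hipos hile
      · intro u
        rcases u with j' | b' | c'
        · rw [BGraph, SimpleGraph.fromRel_adj]; dsimp only
          rw [modsucc i.isLt j'.isLt, modsucc j'.isLt i.isLt]
          simp only [ne_eq, Sum.inl.injEq, Sum.inr.injEq, Fin.ext_iff, Fin.mk.injEq,
            reduceCtorEq, or_false, false_or, not_false_iff, and_true, true_and]
          rw [hsucc]; split_ifs <;> omega
        · refine iff_of_false ?_ (by simp)
          rw [BGraph, SimpleGraph.fromRel_adj]
          rintro ⟨-, h | h⟩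
          · exact absurd h.1 (by omega)
          · exact h
        · refine iff_of_false ?_ (by simp)
          rw [BGraph, SimpleGraph.fromRel_adj]
          rintro ⟨-, h | h⟩
          · exact absurd h.1 (by omega)
          · exact h
  · -- path vertices
    rcases Nat.eq_zero_or_pos a.val with ha0 | hapos
    · -- first path vertex w₁
      rw [nbr_sum_two _ (gB k) _ (Sum.inl ⟨0, by omega⟩)
          (Sum.inr (Sum.inl ⟨1, by omega⟩)) (by simp)]
      · have e1 : gB k (Sum.inl (⟨0, by omega⟩ : Fin (k+1))) = cpp 0 := by
          show ccp (min 0 (k+1-0)) = cpp 0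
          rw [show min 0 (k+1-0) = 0 by omega]
          unfold ccp cpp; norm_num
        have e2 : gB k (Sum.inr (Sum.inl (⟨1, by omega⟩ : Fin (k-1-1))))
            = cpp (min 2 (k-3)) := by
          show cpp (min (1+1) (k-1-(1+1))) = _
          exact congrArg cpp (by omega)
        have e3 : gB k (Sum.inr (Sum.inl a)) = cpp 1 := by
          show cpp (min (a.val+1) (k-1-(a.val+1))) = cpp 1; congr 1; omega
        rw [e1, e2, e3]
        rcases Nat.lt_or_ge k 6 with h6 | h6
        · rw [show min 2 (k-3) = 1 by omega]; exact Lcp_one_peak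
        · rw [show min 2 (k-3) = 2 by omega]; exact Lcp_one_deep
      · intro u
        rcases u with i' | b' | c'
        · rw [BGraph, SimpleGraph.fromRel_adj]; dsimp only
          simp only [ne_eq, Sum.inl.injEq, Sum.inr.injEq, Fin.ext_iff, Fin.mk.injEq,
            reduceCtorEq, or_false, false_or, not_false_iff, and_true, true_and]
          omega
        · rw [BGraph, SimpleGraph.fromRel_adj]; dsimp only
          simp only [ne_eq, Sum.inl.injEq, Sum.inr.injEq, Fin.ext_iff, Fin.mk.injEq,
            reduceCtorEq, or_false, false_or, not_false_iff, and_true, true_and]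
          omega
        · refine iff_of_false ?_ (by simp)
          rw [BGraph, SimpleGraph.fromRel_adj]
          rintro ⟨-, h | h⟩
          · exact absurd h.1 (by omega)
          · exact h
    rcases Nat.lt_or_ge a.val (k-3) with hamid | halast
    · -- middle path vertex, 1 ≤ a.val ≤ k-4
      rw [nbr_sum_two _ (gB k) _ (Sum.inr (Sum.inl ⟨a.val - 1, by omega⟩))
          (Sum.inr (Sum.inl ⟨a.val + 1, by omega⟩))
          (by simp only [ne_eq, Sum.inl.injEq, Sum.inr.injEq, Fin.mk.injEq]; omega)]
      · have e1 : gB k (Sum.inr (Sum.inl (⟨a.val - 1, by omega⟩ : Fin (k-1-1))))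
            = cpp (min (a.val+1-1) (k-1-(a.val+1-1))) := by
          show cpp (min (a.val-1+1) (k-1-(a.val-1+1))) = _
          exact congrArg cpp (by omega)
        have e2 : gB k (Sum.inr (Sum.inl (⟨a.val + 1, by omega⟩ : Fin (k-1-1))))
            = cpp (min (a.val+1+1) (k-1-(a.val+1+1))) := rfl
        have e3 : gB k (Sum.inr (Sum.inl a)) = cpp (min (a.val+1) (k-1-(a.val+1))) := rfl
        rw [e1, e2, e3]
        exact path_two_bound k (a.val+1) (by omega) hke (by omega) (by omega)
      · intro u
        rcases u with i' | b' | c'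
        · refine iff_of_false ?_ (by simp)
          rw [BGraph, SimpleGraph.fromRel_adj]
          rintro ⟨-, h | h⟩
          · exact h
          · exact absurd h.2 (by omega)
        · rw [BGraph, SimpleGraph.fromRel_adj]; dsimp only
          simp only [ne_eq, Sum.inl.injEq, Sum.inr.injEq, Fin.ext_iff, Fin.mk.injEq,
            reduceCtorEq, or_false, false_or, not_false_iff, and_true, true_and]
          omega
        · refine iff_of_false ?_ (by simp)
          rw [BGraph, SimpleGraph.fromRel_adj]
          rintro ⟨-, h | h⟩
          · exact absurd h.1 (by omega)
          · exact h
    · -- last path vertex, a.val = k-3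
      have ha : a.val = k - 3 := by have := a.isLt; omega
      rw [nbr_sum_two _ (gB k) _ (Sum.inr (Sum.inr ⟨0, by omega⟩))
          (Sum.inr (Sum.inl ⟨k - 4, by omega⟩)) (by simp)]
      · have e1 : gB k (Sum.inr (Sum.inr (⟨0, by omega⟩ : Fin (k+1)))) = cpp 0 := by
          show ccp (min 0 (k+1-0)) = cpp 0
          rw [show min 0 (k+1-0) = 0 by omega]
          unfold ccp cpp; norm_num
        have e2 : gB k (Sum.inr (Sum.inl (⟨k - 4, by omega⟩ : Fin (k-1-1))))
            = cpp (min 2 (k-3)) := by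
          show cpp (min (k-4+1) (k-1-(k-4+1))) = _; congr 1; omega
        have e3 : gB k (Sum.inr (Sum.inl a)) = cpp 1 := by
          show cpp (min (a.val+1) (k-1-(a.val+1))) = cpp 1; congr 1; omega
        rw [e1, e2, e3]
        rcases Nat.lt_or_ge k 6 with h6 | h6
        · rw [show min 2 (k-3) = 1 by omega]; exact Lcp_one_peak
        · rw [show min 2 (k-3) = 2 by omega]; exact Lcp_one_deep
      · intro u
        rcases u with i' | b' | c'
        · refine iff_of_false ?_ (by simp)
          rw [BGraph, SimpleGraph.fromRel_adj]
          rintro ⟨-, h | h⟩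
          · exact h
          · exact absurd h.2 (by omega)
        · rw [BGraph, SimpleGraph.fromRel_adj]; dsimp only
          simp only [ne_eq, Sum.inl.injEq, Sum.inr.injEq, Fin.ext_iff, Fin.mk.injEq,
            reduceCtorEq, or_false, false_or, not_false_iff, and_true, true_and]
          omega
        · rw [BGraph, SimpleGraph.fromRel_adj]; dsimp only
          simp only [ne_eq, Sum.inl.injEq, Sum.inr.injEq, Fin.ext_iff, Fin.mk.injEq,
            reduceCtorEq, or_false, false_or, not_false_iff, and_true, true_and]
          omega
  · -- second cycle
    rcases Nat.eq_zero_or_pos j.val with hj0 | hjpos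
    · rw [nbr_sum_three _ (gB k) _ (Sum.inr (Sum.inr ⟨1, by omega⟩))
          (Sum.inr (Sum.inr ⟨k, by omega⟩)) (Sum.inr (Sum.inl ⟨k-3, by omega⟩))
          (by simp only [ne_eq, Sum.inl.injEq, Sum.inr.injEq, Fin.mk.injEq]; omega)
          (by simp) (by simp)]
      · have e1 : gB k (Sum.inr (Sum.inr (⟨1, by omega⟩ : Fin (k+1)))) = ccp 1 := by
          show ccp (min 1 (k+1-1)) = ccp 1; congr 1; omega
        have e2 : gB k (Sum.inr (Sum.inr (⟨k, by omega⟩ : Fin (k+1)))) = ccp 1 := by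
          show ccp (min k (k+1-k)) = ccp 1; congr 1; omega
        have e3 : gB k (Sum.inr (Sum.inl (⟨k-3, by omega⟩ : Fin (k-1-1)))) = cpp 1 := by
          show cpp (min (k-3+1) (k-1-(k-3+1))) = cpp 1; congr 1; omega
        have e4 : gB k (Sum.inr (Sum.inr j)) = 1 := by
          show ccp (min j.val (k+1-j.val)) = 1
          rw [show min j.val (k+1-j.val) = 0 by omega]
          unfold ccp; simp
        rw [e1, e2, e3, e4, mul_one]; exact Ljunction
      · intro u
        rcases u with i' | b' | c'
        · refine iff_of_false ?_ (by simp)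
          rw [BGraph, SimpleGraph.fromRel_adj]
          rintro ⟨-, h | h⟩
          · exact h
          · exact absurd h.1 (by omega)
        · rw [BGraph, SimpleGraph.fromRel_adj]; dsimp only
          simp only [ne_eq, Sum.inl.injEq, Sum.inr.injEq, Fin.ext_iff, Fin.mk.injEq,
            reduceCtorEq, or_false, false_or, not_false_iff, and_true, true_and]
          omega
        · rw [BGraph, SimpleGraph.fromRel_adj]; dsimp only
          rw [modsucc j.isLt c'.isLt, modsucc c'.isLt j.isLt]
          simp only [ne_eq, Sum.inl.injEq, Sum.inr.injEq, Fin.ext_iff, Fin.mk.injEq,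
            reduceCtorEq, or_false, false_or, not_false_iff, and_true, true_and]
          omega
    · have hjle : j.val ≤ k := by have := j.isLt; omega
      have hsucc : (j.val+1) % (k+1) = if j.val = k then 0 else j.val + 1 := by
        split_ifs with h
        · rw [h]; simp [Nat.mod_self]
        · exact Nat.mod_eq_of_lt (by omega)
      rw [nbr_sum_two _ (gB k) _ (Sum.inr (Sum.inr ⟨j.val - 1, by omega⟩))
          (Sum.inr (Sum.inr ⟨(j.val + 1) % (k+1), Nat.mod_lt _ (by omega)⟩))
          (by simp only [ne_eq, Sum.inl.injEq, Sum.inr.injEq, Fin.mk.injEq]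
              rw [hsucc]; split_ifs <;> omega)]
      · have e1 : gB k (Sum.inr (Sum.inr (⟨j.val - 1, by omega⟩ : Fin (k+1))))
            = ccp (min (j.val-1) (k+1-(j.val-1))) := rfl
        have e2 : gB k (Sum.inr (Sum.inr
              (⟨(j.val + 1) % (k+1), Nat.mod_lt _ (by omega)⟩ : Fin (k+1))))
            = ccp (min (j.val+1) (k+1-(j.val+1))) := by
          show ccp (min ((j.val+1) % (k+1)) (k+1-((j.val+1) % (k+1)))) = _
          rw [hsucc]; split_ifs with h
          · congr 1; omega
          · rfl
        have e3 : gB k (Sum.inr (Sum.inr j)) = ccp (min j.val (k+1-j.val)) := rfl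
        rw [e1, e2, e3]
        exact cyc_two_bound k j.val hk hke hjpos hjle
      · intro u
        rcases u with i' | b' | c'
        · refine iff_of_false ?_ (by simp)
          rw [BGraph, SimpleGraph.fromRel_adj]
          rintro ⟨-, h | h⟩
          · exact h
          · exact absurd h.1 (by omega)
        · refine iff_of_false ?_ (by simp)
          rw [BGraph, SimpleGraph.fromRel_adj]
          rintro ⟨-, h | h⟩
          · exact h
          · exact absurd h.2 (by omega)
        · rw [BGraph, SimpleGraph.fromRel_adj]; dsimp only
          rw [modsucc j.isLt c'.isLt, modsucc c'.isLt j.isLt]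
          simp only [ne_eq, Sum.inl.injEq, Sum.inr.injEq, Fin.ext_iff, Fin.mk.injEq,
            reduceCtorEq, or_false, false_or, not_false_iff, and_true, true_and]
          rw [hsucc]; split_ifs <;> omega

noncomputable def wC (m q : ℕ) : Fin m ⊕ Fin (q-1) → ℝ := fun v =>
  match v with
  | Sum.inl i => (29/50)^(min i.val (m - i.val))
  | Sum.inr j => (29/50)^(min (j.val+1) (q-1-j.val))

lemma wC_pos (m q : ℕ) (a : Fin m ⊕ Fin (q-1)) : 0 < wC m q a := by
  rcases a with i | j
  · show (0:ℝ) < (29/50)^(min i.val (m - i.val)); positivity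
  · show (0:ℝ) < (29/50)^(min (j.val+1) (q-1-j.val)); positivity


lemma Lbeta_mono {e d : ℕ} (h : e ≤ d) : (29/50:ℝ)^d ≤ (29/50)^e :=
  pow_le_pow_of_le_one (by norm_num) (by norm_num) h

lemma Lbeta_step (d : ℕ) : (229/100) * (29/50:ℝ)^(d+1) ≤ (29/50)^d + (29/50)^(d+2) := by
  have he : (0:ℝ) < (29/50)^d := by positivity
  have h1 : (29/50:ℝ)^(d+1) = (29/50)^d * (29/50) := by ring
  have h2 : (29/50:ℝ)^(d+2) = (29/50)^d * (29/50)^2 := by ring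
  nlinarith [he]

lemma beta_pair {d d1 d2 : ℕ} (hd : 1 ≤ d)
    (h : (d1 ≤ d-1 ∧ d2 ≤ d+1) ∨ (d2 ≤ d-1 ∧ d1 ≤ d+1)) :
    (229/100) * (29/50:ℝ)^d ≤ (29/50)^d1 + (29/50)^d2 := by
  obtain ⟨e, rfl⟩ : ∃ e, d = e + 1 := ⟨d - 1, by omega⟩
  rcases h with ⟨ha, hb⟩ | ⟨ha, hb⟩
  · have h1 : (29/50:ℝ)^e ≤ (29/50)^d1 := Lbeta_mono (by omega)
    have h2 : (29/50:ℝ)^(e+2) ≤ (29/50)^d2 := Lbeta_mono (by omega)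
    linarith [Lbeta_step e]
  · have h1 : (29/50:ℝ)^e ≤ (29/50)^d2 := Lbeta_mono (by omega)
    have h2 : (29/50:ℝ)^(e+2) ≤ (29/50)^d1 := Lbeta_mono (by omega)
    linarith [Lbeta_step e]

lemma C_noncenter (m q : ℕ) (hm : 3 ≤ m) (hq : 3 ≤ q) (a : Fin m ⊕ Fin (q-1))
    (ha : a ≠ Sum.inl ⟨0, by omega⟩) :
    ∃ u1 u2, u1 ≠ u2 ∧ (CGraph m q).Adj a u1 ∧ (CGraph m q).Adj a u2 ∧
      (229/100) * wC m q a ≤ wC m q u1 + wC m q u2 := by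
  rcases a with i | j
  · -- cycle vertex, i.val ≥ 1
    have hi1 : 1 ≤ i.val := by
      rcases Nat.eq_zero_or_pos i.val with h | h
      · exact absurd (congrArg Sum.inl (Fin.ext h)) ha
      · exact h
    have him := i.isLt
    have hsucc : (i.val+1) % m = if i.val = m-1 then 0 else i.val + 1 := by
      split_ifs with h
      · rw [h, Nat.sub_add_cancel (by omega), Nat.mod_self]
      · exact Nat.mod_eq_of_lt (by omega)
    refine ⟨Sum.inl ⟨i.val - 1, by omega⟩, Sum.inl ⟨(i.val+1) % m, Nat.mod_lt _ (by omega)⟩,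
      ?_, ?_, ?_, ?_⟩
    · simp only [ne_eq, Sum.inl.injEq, Fin.mk.injEq]
      rw [hsucc]; split_ifs <;> omega
    · rw [CGraph, SimpleGraph.fromRel_adj]
      refine ⟨?_, Or.inr ?_⟩
      · simp only [ne_eq, Sum.inl.injEq, Fin.ext_iff, Fin.mk.injEq]
        omega
      · show (i.val - 1 + 1) % m = i.val
        rw [Nat.sub_add_cancel (by omega)]
        exact Nat.mod_eq_of_lt him
    · rw [CGraph, SimpleGraph.fromRel_adj]
      refine ⟨?_, Or.inl rfl⟩
      simp only [ne_eq, Sum.inl.injEq, Fin.ext_iff, Fin.mk.injEq]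
      rw [hsucc]; split_ifs <;> omega
    · show (229/100) * (29/50:ℝ)^(min i.val (m - i.val)) ≤
        (29/50)^(min (i.val-1) (m-(i.val-1))) + (29/50)^(min ((i.val+1)%m) (m-(i.val+1)%m))
      apply beta_pair (by omega)
      rw [hsucc]; split_ifs <;> omega
  · -- path vertex
    have hjq := j.isLt
    rcases Nat.eq_zero_or_pos j.val with hj0 | hj1
    · -- j = 0 : neighbors inl 0 and inr 1
      refine ⟨Sum.inl ⟨0, by omega⟩, Sum.inr ⟨1, by omega⟩, by simp, ?_, ?_, ?_⟩
      · rw [CGraph, SimpleGraph.fromRel_adj]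
        exact ⟨by simp, Or.inr ⟨rfl, Or.inl hj0⟩⟩
      · rw [CGraph, SimpleGraph.fromRel_adj]
        refine ⟨by first | (simp [Fin.ext_iff]; omega) | simp [Fin.ext_iff], Or.inl ?_⟩
        show j.val + 1 = 1
        omega
      · show (229/100) * (29/50:ℝ)^(min (j.val+1) (q-1-j.val)) ≤
          (29/50)^(min 0 (m-0)) + (29/50)^(min (1+1) (q-1-1))
        apply beta_pair (by omega)
        omega
    rcases Nat.lt_or_ge j.val (q-2) with hmid | hlast
    · -- middle path vertex
      refine ⟨Sum.inr ⟨j.val - 1, by omega⟩, Sum.inr ⟨j.val + 1, by omega⟩,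
        by first | (simp [Fin.ext_iff]; omega) | simp [Fin.ext_iff], ?_, ?_, ?_⟩
      · rw [CGraph, SimpleGraph.fromRel_adj]
        refine ⟨by first | (simp [Fin.ext_iff]; omega) | simp [Fin.ext_iff], Or.inr ?_⟩
        show j.val - 1 + 1 = j.val
        omega
      · rw [CGraph, SimpleGraph.fromRel_adj]
        exact ⟨by first | (simp [Fin.ext_iff]; omega) | simp [Fin.ext_iff], Or.inl rfl⟩
      · show (229/100) * (29/50:ℝ)^(min (j.val+1) (q-1-j.val)) ≤
          (29/50)^(min (j.val-1+1) (q-1-(j.val-1))) + (29/50)^(min (j.val+1+1) (q-1-(j.val+1)))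
        apply beta_pair (by omega)
        omega
    · -- j = q-2 : neighbors inr (j-1) and inl 0
      have hj : j.val = q - 2 := by omega
      refine ⟨Sum.inr ⟨j.val - 1, by omega⟩, Sum.inl ⟨0, by omega⟩, by simp, ?_, ?_, ?_⟩
      · rw [CGraph, SimpleGraph.fromRel_adj]
        refine ⟨by first | (simp [Fin.ext_iff]; omega) | simp [Fin.ext_iff], Or.inr ?_⟩
        show j.val - 1 + 1 = j.val
        omega
      · rw [CGraph, SimpleGraph.fromRel_adj]
        exact ⟨by simp, Or.inr ⟨rfl, Or.inr hj⟩⟩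
      · show (229/100) * (29/50:ℝ)^(min (j.val+1) (q-1-j.val)) ≤
          (29/50)^(min (j.val-1+1) (q-1-(j.val-1))) + (29/50)^(min 0 (m-0))
        apply beta_pair (by omega)
        omega

lemma C_center (m q : ℕ) (hm : 3 ≤ m) (hq : 3 ≤ q) :
    ∃ u1 u2 u3 u4 : Fin m ⊕ Fin (q-1),
      u1 ≠ u2 ∧ u1 ≠ u3 ∧ u1 ≠ u4 ∧ u2 ≠ u3 ∧ u2 ≠ u4 ∧ u3 ≠ u4 ∧
      (CGraph m q).Adj (Sum.inl ⟨0, by omega⟩) u1 ∧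
      (CGraph m q).Adj (Sum.inl ⟨0, by omega⟩) u2 ∧
      (CGraph m q).Adj (Sum.inl ⟨0, by omega⟩) u3 ∧
      (CGraph m q).Adj (Sum.inl ⟨0, by omega⟩) u4 ∧
      (229/100) * wC m q (Sum.inl ⟨0, by omega⟩) + 3/100 ≤
        wC m q u1 + wC m q u2 + wC m q u3 + wC m q u4 := by
  refine ⟨Sum.inl ⟨1, by omega⟩, Sum.inl ⟨m-1, by omega⟩, Sum.inr ⟨0, by omega⟩,
    Sum.inr ⟨q-2, by omega⟩, by first | (simp [Fin.ext_iff]; omega) | simp [Fin.ext_iff], by simp, by simp,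
    by simp, by simp, by first | (simp [Fin.ext_iff]; omega) | simp [Fin.ext_iff], ?_, ?_, ?_, ?_, ?_⟩
  · rw [CGraph, SimpleGraph.fromRel_adj]
    refine ⟨by simp [Fin.ext_iff], Or.inl ?_⟩
    show (0 + 1) % m = 1
    exact Nat.mod_eq_of_lt (by omega)
  · rw [CGraph, SimpleGraph.fromRel_adj]
    refine ⟨by first | (simp [Fin.ext_iff]; omega) | simp [Fin.ext_iff], Or.inr ?_⟩
    show (m - 1 + 1) % m = 0
    rw [Nat.sub_add_cancel (by omega), Nat.mod_self]
  · rw [CGraph, SimpleGraph.fromRel_adj]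
    exact ⟨by simp, Or.inl ⟨rfl, Or.inl rfl⟩⟩
  · rw [CGraph, SimpleGraph.fromRel_adj]
    exact ⟨by simp, Or.inl ⟨rfl, Or.inr rfl⟩⟩
  · show (229/100) * (29/50:ℝ)^(min 0 (m-0)) + 3/100 ≤
      (29/50)^(min 1 (m-1)) + (29/50)^(min (m-1) (m-(m-1))) +
      (29/50)^(min (0+1) (q-1-0)) + (29/50)^(min (q-2+1) (q-1-(q-2)))
    rw [show min 0 (m-0) = 0 by omega, show min 1 (m-1) = 1 by omega,
      show min (m-1) (m-(m-1)) = 1 by omega, show min (0+1) (q-1-0) = 1 by omega,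
      show min (q-2+1) (q-1-(q-2)) = 1 by omega]
    norm_num

/-- Let `n ≥ 7` with `n ≡ 0 (mod 6)` and `k = ⌈n/3⌉`.  If a connected
simple graph `G` of order `n` contains a subgraph isomorphic to `C(m,q)` for some
`m, q ≥ 3`, then `ρ(G) > ρ(B(k+1, k-1, k+1))`. -/
theorem CGraph_sub_mod_six_zero (n : ℕ) (hn : 7 ≤ n) (hmod : n % 6 = 0)
    (k : ℕ) (hk : k = (n + 2) / 3)
    (V : Type) [Fintype V] (G : SimpleGraph V) (hcard : Fintype.card V = n)
    (hconn : G.Connected)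
    (hsub : ∃ m q : ℕ, 3 ≤ m ∧ 3 ≤ q ∧ containsCopy (CGraph m q) G) :
    specRad (BGraph (k + 1) (k - 1) (k + 1)) < specRad G := by
  classical
  obtain ⟨m, q, hm, hq, f, hf⟩ := hsub
  have hk4 : 4 ≤ k := by omega
  have hke : k % 2 = 0 := by omega
  -- Upper bound for the B-graph via the Collatz–Wielandt certificate `gB`.
  have hB : specRad (BGraph (k+1) (k-1) (k+1)) ≤ 229/100 := by
    rw [specRad_eq']
    apply Real.sSup_le _ (by norm_num)
    intro μ hμ
    refine collatz_upper' _ ?_ (gB k) (fun v => gB_pos k v) _ ?_ μ hμ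
    · intro i j
      rw [SimpleGraph.adjMatrix_apply]
      split <;> norm_num
    · exact B_cert k hk4 hke
  -- Lower bound for `G` using the pushed-forward spider test vector.
  have hG : (229/100 : ℝ) < specRad G := by
    set A : Matrix V V ℝ := G.adjMatrix ℝ with hA
    set x : V → ℝ := Function.extend f (wC m q) 0 with hxdef
    have hx0 : ∀ v, 0 ≤ x v := by
      intro v
      rcases em (∃ a, f a = v) with ⟨a, rfl⟩ | hnon
      · rw [hxdef, hf.extend_apply]
        exact le_of_lt (wC_pos m q a)
      · rw [hxdef, Function.extend_apply' _ _ _ hnon]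
        exact le_refl 0
    have hxf : ∀ a, x (f a) = wC m q a := fun a => by
      rw [hxdef, hf.extend_apply]
    have hAnn : ∀ i j, 0 ≤ A i j := by
      intro i j
      rw [hA, SimpleGraph.adjMatrix_apply]
      split <;> norm_num
    have hherm : A.IsHermitian := by
      ext i j
      simp only [Matrix.conjTranspose_apply, star_trivial, hA,
        SimpleGraph.adjMatrix_apply, SimpleGraph.adj_comm]
    have hbdd : BddAbove (spectrum ℝ A) := by
      refine ⟨(Fintype.card V : ℝ), fun μ hμ => ?_⟩
      refine collatz_upper' A hAnn (fun _ => 1) (fun _ => one_pos) _ ?_ μ hμ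
      intro v
      have h1 : (A.mulVec fun _ => 1) v = ∑ u, A v u := by
        simp [Matrix.mulVec, dotProduct]
      rw [h1, mul_one]
      calc ∑ u, A v u ≤ ∑ _u : V, (1:ℝ) := by
            refine Finset.sum_le_sum fun u _ => ?_
            rw [hA, SimpleGraph.adjMatrix_apply]; split <;> norm_num
        _ = (Fintype.card V : ℝ) := by simp [Finset.card_univ]
    -- center vertex
    set c : V := f (Sum.inl ⟨0, by omega⟩) with hcdef
    have hxc : x c = 1 := by
      rw [hcdef, hxf]
      show (29/50:ℝ)^(min 0 (m-0)) = 1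
      rw [Nat.zero_min, pow_zero]
    have hstrict : (229/100) * x c ^ 2 + 3/100 ≤ x c * (A.mulVec x) c := by
      obtain ⟨u1, u2, u3, u4, h12, h13, h14, h23, h24, h34, ha1, ha2, ha3, ha4, hsum⟩ :=
        C_center m q hm hq
      have hlow : x (f u1) + x (f u2) + x (f u3) + x (f u4) ≤ (A.mulVec x) c := by
        rw [hcdef]
        exact nbr_lower_four G x hx0 _ _ _ _ _
          (fun h => h12 (hf h)) (fun h => h13 (hf h)) (fun h => h14 (hf h))
          (fun h => h23 (hf h)) (fun h => h24 (hf h)) (fun h => h34 (hf h))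
          (f.map_adj ha1) (f.map_adj ha2) (f.map_adj ha3) (f.map_adj ha4)
      rw [hxf, hxf, hxf, hxf] at hlow
      have hwc : wC m q (Sum.inl (⟨0, by omega⟩ : Fin m)) = 1 := by
        show (29/50:ℝ)^(min 0 (m-0)) = 1
        rw [Nat.zero_min, pow_zero]
      rw [hwc] at hsum
      rw [hxc]
      nlinarith [le_trans hsum hlow]
    have hpv : ∀ v, (229/100) * x v ^ 2 ≤ x v * (A.mulVec x) v := by
      intro v
      rcases em (∃ a, f a = v) with ⟨a, rfl⟩ | hnon
      · rcases em (a = Sum.inl ⟨0, by omega⟩) with rfl | hne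
        · have : f (Sum.inl (⟨0, by omega⟩ : Fin m)) = c := by rw [hcdef]
          rw [this]
          linarith [hstrict]
        · obtain ⟨u1, u2, h12, ha1, ha2, hineq⟩ := C_noncenter m q hm hq a hne
          have hlow : x (f u1) + x (f u2) ≤ (A.mulVec x) (f a) :=
            nbr_lower_two G x hx0 _ _ _ (fun h => h12 (hf h))
              (f.map_adj ha1) (f.map_adj ha2)
          rw [hxf, hxf] at hlow
          have h1 : (229/100) * x (f a) ≤ (A.mulVec x) (f a) := by
            rw [hxf]; linarith
          have h2 := hx0 (f a)
          nlinarith [mul_le_mul_of_nonneg_left h1 h2]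
      · have hz : x v = 0 := by rw [hxdef, Function.extend_apply' _ _ _ hnon]; rfl
        rw [hz]; ring_nf
        exact le_refl 0
    have hsum2 : (229/100) * (x ⬝ᵥ x) + 3/100 ≤ x ⬝ᵥ A.mulVec x := by
      have hFs : 3/100 ≤ ∑ v, (x v * (A.mulVec x) v - (229/100) * x v ^ 2) := by
        refine le_trans (by linarith [hstrict]) (Finset.single_le_sum
          (f := fun v => x v * (A.mulVec x) v - (229/100) * x v ^ 2)
          (fun v _ => by linarith [hpv v]) (Finset.mem_univ c))
      have heq : ∑ v, (x v * (A.mulVec x) v - (229/100) * x v ^ 2)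
          = x ⬝ᵥ A.mulVec x - (229/100) * (x ⬝ᵥ x) := by
        rw [Finset.sum_sub_distrib]
        simp only [dotProduct, Finset.mul_sum]
        congr 1
        exact Finset.sum_congr rfl fun v _ => by ring
      rw [heq] at hFs
      linarith
    have hS1 : (1:ℝ) ≤ x ⬝ᵥ x := by
      have h1 : (1:ℝ) = x c * x c := by rw [hxc]; norm_num
      rw [h1]
      exact Finset.single_le_sum (f := fun v => x v * x v)
        (fun v _ => mul_self_nonneg _) (Finset.mem_univ c)
    have hray := rayleigh_le_sSup' A hherm hbdd x
    rw [specRad_eq']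
    by_contra hcon
    push_neg at hcon
    have : sSup (spectrum ℝ A) * (x ⬝ᵥ x) ≤ (229/100) * (x ⬝ᵥ x) :=
      mul_le_mul_of_nonneg_right hcon (by linarith)
    linarith
  linarith
end

section
/- Let n ≥ 7 be an integer with n ≡ 4 (mod 6) and set k = ⌈n/3⌉. If a connected simple graph G of order n contains a subgraph isomorphic to C(m, q) for some integers m, q ≥ 3, then ρ(G) > ρ(B(k−1, k+1, k−1)). -/
open SimpleGraph

/-!
Both spectral radii are compared with constants, `ρ(B(k-1, k+1, k-1)) ≤ 2.27 < 2.28 ≤ ρ(G)`,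
using test vectors whose entries depend only on the distance to the vertices of degree at
least 3. On `C(m,q)` a nonnegative vector with `A x ≥ 2.28 x` extends by zero to `G`, and its
Rayleigh quotient gives `ρ(G) ≥ 2.28`. On `B(m,p,q)` a positive vector with `A x ≤ 2.27 x` gives
`ρ(B(m,p,q)) ≤ 2.27` by the Collatz–Wielandt bound, as soon as `p ≥ 5` and both cycle lengths are
3 or at least 5; for `n ≡ 4 (mod 6)` the number `k` is even and at least 4.
-/

open scoped Classical
open Matrix

section Spectral

variable {V : Type*} [Fintype V]

lemma adjMat_eq (G : SimpleGraph V) : adjMat G = G.adjMatrix ℝ := rfl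

lemma specRad_eq (G : SimpleGraph V) : specRad G = sSup (spectrum ℝ (adjMat G)) := rfl

lemma isHermitian_adjMat (G : SimpleGraph V) : (adjMat G).IsHermitian :=
  G.isHermitian_adjMatrix ℝ

lemma adjMat_mulVec_apply (G : SimpleGraph V) (x : V → ℝ) (v : V) :
    (adjMat G *ᵥ x) v = ∑ u ∈ G.neighborFinset v, x u :=
  G.adjMatrix_mulVec_apply v x

lemma dotProduct_adjMat_mulVec_comm (G : SimpleGraph V) (x y : V → ℝ) :
    x ⬝ᵥ (adjMat G *ᵥ y) = (adjMat G *ᵥ x) ⬝ᵥ y := by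
  rw [dotProduct_mulVec, ← mulVec_transpose, adjMat_eq, transpose_adjMatrix]

lemma dotProduct_adjMat_mulVec_le_specRad (G : SimpleGraph V) (x : V → ℝ) :
    x ⬝ᵥ (adjMat G *ᵥ x) ≤ specRad G * (x ⬝ᵥ x) := by
  set M := algebraMap ℝ (Matrix V V ℝ) (specRad G) - adjMat G
  have hM : M.IsHermitian :=
    (IsSelfAdjoint.algebraMap _ (IsSelfAdjoint.all (specRad G))).sub (isHermitian_adjMat G)
  have hMpos : M.PosSemidef := by
    refine hM.posSemidef_iff_eigenvalues_nonneg.2 fun i => ?_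
    obtain ⟨_, rfl, μ, hμ, hμi⟩ := (spectrum.singleton_sub_eq (adjMat G) (specRad G)).symm ▸
      hM.eigenvalues_mem_spectrum_real i
    rw [Pi.zero_apply, ← hμi]
    exact sub_nonneg.2 (le_csSup (adjMat G).finite_spectrum.bddAbove hμ)
  simpa only [M, sub_mulVec, dotProduct_sub, Algebra.algebraMap_eq_smul_one, smul_mulVec,
    one_mulVec, dotProduct_smul, smul_eq_mul, star_trivial, sub_nonneg]
    using hMpos.dotProduct_mulVec_nonneg x

/-- Collatz–Wielandt bound: a positive vector `x` with `A x ≤ c x` bounds every eigenvalue,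
since the entrywise absolute value `w` of an eigenvector for `μ` satisfies `μ w ≤ A w`. -/
lemma specRad_le_of_mulVec_le (G : SimpleGraph V) {x : V → ℝ} (hx : ∀ v, 0 < x v) {c : ℝ}
    (hc : 0 ≤ c) (h : adjMat G *ᵥ x ≤ c • x) : specRad G ≤ c := by
  have hA := isHermitian_adjMat G
  rw [specRad_eq]
  refine Real.sSup_le (fun μ hμ => ?_) hc
  rw [hA.spectrum_real_eq_range_eigenvalues] at hμ
  obtain ⟨i, rfl⟩ := hμ
  set v : V → ℝ := ⇑(hA.eigenvectorBasis i)
  set w : V → ℝ := fun u => |v u|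
  have hw : hA.eigenvalues i • w ≤ adjMat G *ᵥ w := fun u => by
    have hvu := congrFun (hA.mulVec_eigenvectorBasis i) u
    calc hA.eigenvalues i * |v u| ≤ |hA.eigenvalues i * v u| := by
          rw [abs_mul]; gcongr; exact le_abs_self _
      _ = |∑ t ∈ G.neighborFinset u, v t| := by
          rw [← adjMat_mulVec_apply]; simp only [v, hvu, Pi.smul_apply, smul_eq_mul]
      _ ≤ (adjMat G *ᵥ w) u := by
          rw [adjMat_mulVec_apply]; exact Finset.abs_sum_le_sum_abs _ _
  have hxw : 0 < x ⬝ᵥ w := by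
    obtain ⟨u, hu⟩ : ∃ u, v u ≠ 0 := by
      by_contra! h0
      exact (hA.eigenvectorBasis.orthonormal.ne_zero i) (by ext u; exact h0 u)
    exact Finset.sum_pos' (fun t _ => mul_nonneg (hx t).le (abs_nonneg _))
      ⟨u, Finset.mem_univ u, mul_pos (hx u) (abs_pos.2 hu)⟩
  refine le_of_mul_le_mul_right ?_ hxw
  calc hA.eigenvalues i * (x ⬝ᵥ w) = x ⬝ᵥ (hA.eigenvalues i • w) := by
        rw [dotProduct_smul, smul_eq_mul]
    _ ≤ x ⬝ᵥ (adjMat G *ᵥ w) :=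
        dotProduct_le_dotProduct_of_nonneg_left hw fun t => (hx t).le
    _ = (adjMat G *ᵥ x) ⬝ᵥ w := dotProduct_adjMat_mulVec_comm G x w
    _ ≤ (c • x) ⬝ᵥ w := dotProduct_le_dotProduct_of_nonneg_right h fun t => abs_nonneg _
    _ = c * (x ⬝ᵥ w) := by rw [smul_dotProduct, smul_eq_mul]

end Spectral

section Extension

variable {V W : Type*} [Fintype V] [Fintype W]

lemma dotProduct_extend_self {f : W → V} (hf : Function.Injective f) (x : W → ℝ) :
    Function.extend f x 0 ⬝ᵥ Function.extend f x 0 = x ⬝ᵥ x :=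
  (Fintype.sum_of_injective f hf _ _
    (fun v hv => by simp [Function.extend_apply' _ _ _ (by simpa using hv)])
    fun w => by simp [hf.extend_apply]).symm

lemma adjMat_mulVec_le_extend {H : SimpleGraph W} {G : SimpleGraph V} (f : H →g G)
    (hf : Function.Injective f) {x : W → ℝ} (hx : 0 ≤ x) (w : W) :
    (adjMat H *ᵥ x) w ≤ (adjMat G *ᵥ Function.extend f x 0) (f w) := by
  rw [adjMat_mulVec_apply, adjMat_mulVec_apply]
  calc ∑ u ∈ H.neighborFinset w, x u
      = ∑ t ∈ (H.neighborFinset w).map ⟨f, hf⟩, Function.extend f x 0 t := by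
        simp [hf.extend_apply]
    _ ≤ ∑ t ∈ G.neighborFinset (f w), Function.extend f x 0 t := by
        refine Finset.sum_le_sum_of_subset_of_nonneg (fun t ht => ?_)
          fun t _ _ => Function.extend_nonneg hx le_rfl t
        obtain ⟨u, hu, rfl⟩ := Finset.mem_map.1 ht
        simpa using f.map_adj ((H.mem_neighborFinset w u).1 hu)

lemma dotProduct_adjMat_mulVec_le_extend {H : SimpleGraph W} {G : SimpleGraph V} (f : H →g G)
    (hf : Function.Injective f) {x : W → ℝ} (hx : 0 ≤ x) :
    x ⬝ᵥ (adjMat H *ᵥ x) ≤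
      Function.extend f x 0 ⬝ᵥ (adjMat G *ᵥ Function.extend f x 0) := by
  calc x ⬝ᵥ (adjMat H *ᵥ x)
      ≤ ∑ w, Function.extend f x 0 (f w) * (adjMat G *ᵥ Function.extend f x 0) (f w) :=
        Finset.sum_le_sum fun w _ => by
          rw [hf.extend_apply]
          exact mul_le_mul_of_nonneg_left (adjMat_mulVec_le_extend f hf hx w) (hx w)
    _ = _ := Fintype.sum_of_injective f hf _ _
        (fun v hv => by simp [Function.extend_apply' _ _ _ (by simpa using hv)]) fun _ => rfl

/-- The Rayleigh quotient of `x` on `H` is at most that of its extension by zero to `G`. -/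
lemma le_specRad_of_smul_le_mulVec {H : SimpleGraph W} {G : SimpleGraph V}
    (hHG : containsCopy H G) {x : W → ℝ} (hx : 0 ≤ x) (hx0 : x ≠ 0) {c : ℝ}
    (h : c • x ≤ adjMat H *ᵥ x) : c ≤ specRad G := by
  obtain ⟨f, hf⟩ := hHG
  have hxx : 0 < x ⬝ᵥ x := by simpa using (dotProduct_self_star_pos_iff (v := x)).2 hx0
  refine le_of_mul_le_mul_right ?_ hxx
  calc c * (x ⬝ᵥ x) = x ⬝ᵥ (c • x) := by rw [dotProduct_smul, smul_eq_mul]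
    _ ≤ x ⬝ᵥ (adjMat H *ᵥ x) := dotProduct_le_dotProduct_of_nonneg_left h hx
    _ ≤ _ := dotProduct_adjMat_mulVec_le_extend f hf hx
    _ ≤ specRad G * (Function.extend f x 0 ⬝ᵥ Function.extend f x 0) :=
        dotProduct_adjMat_mulVec_le_specRad G _
    _ = specRad G * (x ⬝ᵥ x) := by rw [dotProduct_extend_self hf]

end Extension

section RowSums

variable {V : Type*} [Fintype V] {G : SimpleGraph V} {x : V → ℝ} {v : V} {s : Finset V}

lemma sum_le_adjMat_mulVec (hx : 0 ≤ x) (hs : ∀ u ∈ s, G.Adj v u) :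
    ∑ u ∈ s, x u ≤ (adjMat G *ᵥ x) v := by
  rw [adjMat_mulVec_apply]
  exact Finset.sum_le_sum_of_subset_of_nonneg
    (fun u hu => (G.mem_neighborFinset v u).2 (hs u hu)) fun u _ _ => hx u

lemma adjMat_mulVec_le_sum (hx : 0 ≤ x) (hs : ∀ u, G.Adj v u → u ∈ s) :
    (adjMat G *ᵥ x) v ≤ ∑ u ∈ s, x u := by
  rw [adjMat_mulVec_apply]
  exact Finset.sum_le_sum_of_subset_of_nonneg
    (fun u hu => hs u ((G.mem_neighborFinset v u).1 hu)) fun u _ _ => hx u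

end RowSums

lemma succ_mod_eq_iff {L i j : ℕ} (hi : i < L) :
    (i + 1) % L = j ↔ (i + 1 < L ∧ j = i + 1) ∨ (i + 1 = L ∧ j = 0) := by
  rcases Nat.lt_or_ge (i + 1) L with h | h
  · rw [Nat.mod_eq_of_lt h]; omega
  · rw [show i + 1 = L by omega, Nat.mod_self]; omega

lemma eq_succ_mod_iff {L i j : ℕ} (hi : i < L) :
    j = (i + 1) % L ↔ (i + 1 < L ∧ j = i + 1) ∨ (i + 1 = L ∧ j = 0) := by
  rw [eq_comm, succ_mod_eq_iff hi]

/-- The distance from `0` to `i` on a cycle of length `L`; also the distance from the `i`-th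
vertex of a path with `L` edges to the nearer end. -/
def cycleDist (L i : ℕ) : ℕ := min i (L - i)

@[simp] lemma cycleDist_zero (L : ℕ) : cycleDist L 0 = 0 := by simp [cycleDist]

lemma cycleDist_one {L : ℕ} (hL : 2 ≤ L) : cycleDist L 1 = 1 := by
  simp only [cycleDist]; omega

lemma cycleDist_pred_self {L : ℕ} (hL : 2 ≤ L) : cycleDist L (L - 1) = 1 := by
  simp only [cycleDist]; omega

section CGraphBound

noncomputable def cgraphWeight : ℕ → ℝ
  | 0 => 1
  | 1 => 4 / 7
  | 2 => 77 / 250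
  | 3 => 131 / 1000
  | _ => 0

lemma cgraphWeight_nonneg (d : ℕ) : 0 ≤ cgraphWeight d := by
  unfold cgraphWeight; split <;> norm_num

lemma cgraphWeight_antitone : Antitone cgraphWeight := by
  refine antitone_nat_of_succ_le fun d => ?_
  match d with
  | 0 | 1 | 2 | 3 => norm_num [cgraphWeight]
  | _ + 4 => exact le_rfl

lemma cgraphWeight_step {d : ℕ} (hd : 1 ≤ d) :
    57 / 25 * cgraphWeight d ≤ cgraphWeight (d - 1) + cgraphWeight (d + 1) := by
  match d with
  | 1 | 2 | 3 => norm_num [cgraphWeight]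
  | d + 4 =>
    simpa [cgraphWeight] using
      add_nonneg (cgraphWeight_nonneg (d + 3)) (cgraphWeight_nonneg (d + 5))

lemma cgraphWeight_cycle_step {L i a b : ℕ} (hi : i < L) (hi0 : 0 < i) (ha : a + 1 = i)
    (hb : (i + 1 < L ∧ b = i + 1) ∨ (i + 1 = L ∧ b = 0)) :
    57 / 25 * cgraphWeight (cycleDist L i) ≤
      cgraphWeight (cycleDist L a) + cgraphWeight (cycleDist L b) := by
  have hstep := cgraphWeight_step (d := cycleDist L i) (by simp only [cycleDist]; omega)
  rcases (by simp only [cycleDist]; omega :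
      (cycleDist L a = cycleDist L i - 1 ∧ cycleDist L b ≤ cycleDist L i + 1) ∨
      (cycleDist L b = cycleDist L i - 1 ∧ cycleDist L a ≤ cycleDist L i + 1))
    with ⟨h₁, h₂⟩ | ⟨h₁, h₂⟩
  · rw [h₁]; linarith [cgraphWeight_antitone h₂]
  · rw [h₁]; linarith [cgraphWeight_antitone h₂]

end CGraphBound

namespace CGraph

open Sum

noncomputable def testVector (m q : ℕ) : Fin m ⊕ Fin (q - 1) → ℝ :=
  Sum.elim (fun i => cgraphWeight (cycleDist m i)) fun j => cgraphWeight (cycleDist q (j + 1))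

variable {m q : ℕ}

lemma testVector_nonneg : 0 ≤ testVector m q := by
  rintro (i | j) <;> exact cgraphWeight_nonneg _

lemma le_mulVec_testVector_inl (hm : 3 ≤ m) (hq : 3 ≤ q) (i : Fin m) :
    57 / 25 * testVector m q (inl i) ≤ (adjMat (CGraph m q) *ᵥ testVector m q) (inl i) := by
  obtain ⟨i, hi⟩ := i
  rcases Nat.eq_zero_or_pos i with rfl | hi0
  · refine le_trans ?_ (sum_le_adjMat_mulVec testVector_nonneg
      (s := {inl ⟨1, by omega⟩, inl ⟨m - 1, by omega⟩, inr ⟨0, by omega⟩, inr ⟨q - 2, by omega⟩})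
      (by simp [CGraph, Fin.ext_iff, Nat.one_mod_eq_one, Nat.sub_add_cancel (by omega : 1 ≤ m)]
          omega))
    rw [Finset.sum_insert, Finset.sum_insert, Finset.sum_pair]
    · simp only [testVector, Sum.elim_inl, Sum.elim_inr, cycleDist_zero, zero_add,
        cycleDist_one (by omega : 2 ≤ m), cycleDist_pred_self (by omega : 2 ≤ m),
        cycleDist_one (by omega : 2 ≤ q), show q - 2 + 1 = q - 1 by omega,
        cycleDist_pred_self (by omega : 2 ≤ q)]
      norm_num [cgraphWeight]
    all_goals simp [Fin.ext_iff] <;> omega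
  · refine le_trans ?_ (sum_le_adjMat_mulVec testVector_nonneg
      (s := {inl ⟨i - 1, by omega⟩, inl ⟨(i + 1) % m, Nat.mod_lt _ (by omega)⟩})
      (by simp [CGraph, Fin.ext_iff, succ_mod_eq_iff, eq_succ_mod_iff, hi]; omega))
    rw [Finset.sum_pair (by simp [Fin.ext_iff, eq_succ_mod_iff, hi]; omega)]
    exact cgraphWeight_cycle_step (i := i) (a := i - 1) hi hi0 (by omega)
      ((succ_mod_eq_iff hi).1 rfl)

lemma le_mulVec_testVector_inr (hm : 0 < m) (hq : 3 ≤ q) (j : Fin (q - 1)) :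
    57 / 25 * testVector m q (inr j) ≤ (adjMat (CGraph m q) *ᵥ testVector m q) (inr j) := by
  obtain ⟨j, hj⟩ := j
  -- `inr j` sits at position `j + 1` of the `q`-cycle through `inl 0`
  have hstep (b : ℕ) (hb : (j + 2 < q ∧ b = j + 2) ∨ (j + 2 = q ∧ b = 0)) :=
    cgraphWeight_cycle_step (L := q) (i := j + 1) (a := j) (b := b) (by omega) (by omega) rfl hb
  rcases Nat.eq_zero_or_pos j with rfl | hj0
  · refine le_trans ?_ (sum_le_adjMat_mulVec testVector_nonneg
      (s := {inl ⟨0, hm⟩, inr ⟨1, by omega⟩}) (by simp [CGraph, Fin.ext_iff]))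
    rw [Finset.sum_pair (by simp)]
    simpa [testVector] using hstep 2 (by omega)
  by_cases hjq : j = q - 2
  · subst hjq
    refine le_trans ?_ (sum_le_adjMat_mulVec testVector_nonneg
      (s := {inr ⟨q - 3, by omega⟩, inl ⟨0, hm⟩}) (by simp [CGraph, Fin.ext_iff]; omega))
    rw [Finset.sum_pair (by simp)]
    simpa [testVector, show q - 3 + 1 = q - 2 by omega] using hstep 0 (by omega)
  · refine le_trans ?_ (sum_le_adjMat_mulVec testVector_nonneg
      (s := {inr ⟨j - 1, by omega⟩, inr ⟨j + 1, by omega⟩})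
      (by simp [CGraph, Fin.ext_iff]; omega))
    rw [Finset.sum_pair (by simp [Fin.ext_iff])]
    simpa [testVector, show j - 1 + 1 = j by omega] using hstep (j + 2) (by omega)

lemma smul_testVector_le_mulVec (hm : 3 ≤ m) (hq : 3 ≤ q) :
    (57 / 25 : ℝ) • testVector m q ≤ adjMat (CGraph m q) *ᵥ testVector m q := by
  rintro (i | j)
  exacts [le_mulVec_testVector_inl hm hq i, le_mulVec_testVector_inr (by omega) hq j]

end CGraph

lemma le_specRad_of_containsCopy_CGraph {V : Type*} [Fintype V] {G : SimpleGraph V} {m q : ℕ}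
    (hm : 3 ≤ m) (hq : 3 ≤ q) (hG : containsCopy (CGraph m q) G) : 57 / 25 ≤ specRad G := by
  refine le_specRad_of_smul_le_mulVec hG CGraph.testVector_nonneg (fun h => ?_)
    (CGraph.smul_testVector_le_mulVec hm hq)
  simpa [CGraph.testVector, cgraphWeight] using congrFun h (Sum.inl ⟨0, by omega⟩)

section BGraphBound

noncomputable def bgraphCycleWeight : ℕ → ℝ
  | 0 => 127 / 100
  | 1 => 1
  | _ => 4 / 5

noncomputable def bgraphPathWeight : ℕ → ℝ
  | 0 | 1 => 22 / 25
  | _ => 7 / 10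

lemma bgraphCycleWeight_pos (d : ℕ) : 0 < bgraphCycleWeight d := by
  unfold bgraphCycleWeight; split <;> norm_num

lemma bgraphPathWeight_pos (d : ℕ) : 0 < bgraphPathWeight d := by
  unfold bgraphPathWeight; split <;> norm_num

lemma bgraphCycleWeight_of_two_le {d : ℕ} (hd : 2 ≤ d) : bgraphCycleWeight d = 4 / 5 := by
  match d with
  | d + 2 => rfl

lemma bgraphCycleWeight_le_one {d : ℕ} (hd : 1 ≤ d) : bgraphCycleWeight d ≤ 1 := by
  rcases hd.eq_or_lt with rfl | hd
  · rfl
  · rw [bgraphCycleWeight_of_two_le hd]; norm_num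

lemma bgraphPathWeight_le (d : ℕ) : bgraphPathWeight d ≤ 22 / 25 := by
  unfold bgraphPathWeight; split <;> norm_num

lemma bgraphPathWeight_of_two_le {d : ℕ} (hd : 2 ≤ d) : bgraphPathWeight d = 7 / 10 := by
  match d with
  | d + 2 => rfl

lemma bgraphCycleWeight_cycle_step {L i a b : ℕ} (hL : 3 ≤ L) (hL4 : L ≠ 4) (hi : i < L)
    (hi0 : 0 < i) (ha : a + 1 = i) (hb : (i + 1 < L ∧ b = i + 1) ∨ (i + 1 = L ∧ b = 0)) :
    bgraphCycleWeight (cycleDist L a) + bgraphCycleWeight (cycleDist L b) ≤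
      227 / 100 * bgraphCycleWeight (cycleDist L i) := by
  have key : (cycleDist L i = 1 ∧ (cycleDist L a = 0 ∧ 1 ≤ cycleDist L b ∨
        cycleDist L b = 0 ∧ 1 ≤ cycleDist L a)) ∨
      (2 ≤ cycleDist L i ∧ 1 ≤ cycleDist L a ∧ 1 ≤ cycleDist L b ∧
        (2 ≤ cycleDist L a ∨ 2 ≤ cycleDist L b)) := by
    simp only [cycleDist]; omega
  generalize cycleDist L i = d, cycleDist L a = d₁, cycleDist L b = d₂ at key ⊢
  rcases key with ⟨rfl, ⟨rfl, h⟩ | ⟨rfl, h⟩⟩ | ⟨hd, h₁, h₂, h | h⟩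
  · linarith [bgraphCycleWeight_le_one h, show bgraphCycleWeight 0 = 127 / 100 from rfl,
      show bgraphCycleWeight 1 = 1 from rfl]
  · linarith [bgraphCycleWeight_le_one h, show bgraphCycleWeight 0 = 127 / 100 from rfl,
      show bgraphCycleWeight 1 = 1 from rfl]
  · rw [bgraphCycleWeight_of_two_le hd, bgraphCycleWeight_of_two_le h]
    linarith [bgraphCycleWeight_le_one h₂]
  · rw [bgraphCycleWeight_of_two_le hd, bgraphCycleWeight_of_two_le h]
    linarith [bgraphCycleWeight_le_one h₁]

lemma bgraphPathWeight_path_step {p j : ℕ} (hj : 2 ≤ j) (hjp : j + 2 ≤ p) (hp : 5 ≤ p) :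
    bgraphPathWeight (cycleDist p (j - 1)) + bgraphPathWeight (cycleDist p (j + 1)) ≤
      227 / 100 * bgraphPathWeight (cycleDist p j) := by
  rw [bgraphPathWeight_of_two_le (d := cycleDist p j) (by simp only [cycleDist]; omega)]
  rcases (by simp only [cycleDist]; omega : 2 ≤ cycleDist p (j - 1) ∨ 2 ≤ cycleDist p (j + 1))
    with h | h
  · linarith [bgraphPathWeight_of_two_le h, bgraphPathWeight_le (cycleDist p (j + 1))]
  · linarith [bgraphPathWeight_of_two_le h, bgraphPathWeight_le (cycleDist p (j - 1))]

end BGraphBound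

namespace BGraph

open Sum

noncomputable def testVector (m p q : ℕ) : Fin m ⊕ Fin (p - 1) ⊕ Fin q → ℝ :=
  Sum.elim (fun i => bgraphCycleWeight (cycleDist m i))
    (Sum.elim (fun j => bgraphPathWeight (cycleDist p (j + 1)))
      fun i => bgraphCycleWeight (cycleDist q i))

variable {m p q : ℕ}

lemma testVector_pos (u : Fin m ⊕ Fin (p - 1) ⊕ Fin q) : 0 < testVector m p q u := by
  rcases u with i | j | i
  exacts [bgraphCycleWeight_pos _, bgraphPathWeight_pos _, bgraphCycleWeight_pos _]

lemma testVector_nonneg : 0 ≤ testVector m p q := fun u => (testVector_pos u).le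

lemma mulVec_testVector_le_inl (hm : 3 ≤ m) (hm4 : m ≠ 4) (hp : 5 ≤ p) (i : Fin m) :
    (adjMat (BGraph m p q) *ᵥ testVector m p q) (inl i) ≤
      227 / 100 * testVector m p q (inl i) := by
  obtain ⟨i, hi⟩ := i
  rcases Nat.eq_zero_or_pos i with rfl | hi0
  · refine (adjMat_mulVec_le_sum testVector_nonneg (s := {inl ⟨1, by omega⟩,
      inl ⟨m - 1, by omega⟩, inr (inl ⟨0, by omega⟩)}) ?_).trans ?_
    · rintro (⟨j, hj⟩ | ⟨j, hj⟩ | ⟨j, hj⟩) h <;>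
        simp [BGraph, succ_mod_eq_iff, Fin.ext_iff] at h ⊢ <;> omega
    rw [Finset.sum_insert (by simp [Fin.ext_iff]; omega), Finset.sum_pair (by simp)]
    simp only [testVector, Sum.elim_inl, Sum.elim_inr, cycleDist_zero, zero_add,
      cycleDist_one (by omega : 2 ≤ m), cycleDist_pred_self (by omega : 2 ≤ m),
      cycleDist_one (by omega : 2 ≤ p)]
    norm_num [bgraphCycleWeight, bgraphPathWeight]
  · refine (adjMat_mulVec_le_sum testVector_nonneg (s := {inl ⟨i - 1, by omega⟩,
      inl ⟨(i + 1) % m, Nat.mod_lt _ (by omega)⟩}) ?_).trans ?_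
    · rintro (⟨j, hj⟩ | ⟨j, hj⟩ | ⟨j, hj⟩) h <;>
        simp [BGraph, succ_mod_eq_iff, eq_succ_mod_iff, Fin.ext_iff, hi] at h ⊢ <;> omega
    rw [Finset.sum_pair (by simp [Fin.ext_iff, eq_succ_mod_iff, hi]; omega)]
    exact bgraphCycleWeight_cycle_step (i := i) (a := i - 1) hm hm4 hi hi0 (by omega)
      ((succ_mod_eq_iff hi).1 rfl)

lemma mulVec_testVector_le_path (hm : 0 < m) (hp : 5 ≤ p) (hq : 0 < q) (j : Fin (p - 1)) :
    (adjMat (BGraph m p q) *ᵥ testVector m p q) (inr (inl j)) ≤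
      227 / 100 * testVector m p q (inr (inl j)) := by
  obtain ⟨j, hj⟩ := j
  have hend : bgraphCycleWeight 0 + bgraphPathWeight 2 ≤ 227 / 100 * bgraphPathWeight 1 := by
    norm_num [bgraphCycleWeight, bgraphPathWeight]
  rcases Nat.eq_zero_or_pos j with rfl | hj0
  · refine (adjMat_mulVec_le_sum testVector_nonneg
      (s := {inl ⟨0, hm⟩, inr (inl ⟨1, by omega⟩)}) ?_).trans ?_
    · rintro (⟨i, hi⟩ | ⟨i, hi⟩ | ⟨i, hi⟩) h <;>
        simp [BGraph, Fin.ext_iff] at h ⊢ <;> omega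
    rw [Finset.sum_pair (by simp)]
    simpa [testVector, cycleDist_one (by omega : 2 ≤ p),
      show cycleDist p 2 = 2 by simp only [cycleDist]; omega] using hend
  by_cases hjp : j = p - 2
  · subst hjp
    refine (adjMat_mulVec_le_sum testVector_nonneg
      (s := {inr (inr ⟨0, hq⟩), inr (inl ⟨p - 3, by omega⟩)}) ?_).trans ?_
    · rintro (⟨i, hi⟩ | ⟨i, hi⟩ | ⟨i, hi⟩) h <;>
        simp [BGraph, Fin.ext_iff] at h ⊢ <;> omega
    rw [Finset.sum_pair (by simp)]
    simpa [testVector, show p - 3 + 1 = p - 2 by omega,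
      show p - 2 + 1 = p - 1 by omega, cycleDist_pred_self (by omega : 2 ≤ p),
      show cycleDist p (p - 2) = 2 by simp only [cycleDist]; omega] using hend
  · refine (adjMat_mulVec_le_sum testVector_nonneg
      (s := {inr (inl ⟨j - 1, by omega⟩), inr (inl ⟨j + 1, by omega⟩)}) ?_).trans ?_
    · rintro (⟨i, hi⟩ | ⟨i, hi⟩ | ⟨i, hi⟩) h <;>
        simp [BGraph, Fin.ext_iff] at h ⊢ <;> omega
    rw [Finset.sum_pair (by simp [Fin.ext_iff])]
    simpa [testVector, show j - 1 + 1 = j by omega] using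
      bgraphPathWeight_path_step (j := j + 1) (by omega) (by omega) hp

lemma mulVec_testVector_le_inr (hp : 5 ≤ p) (hq : 3 ≤ q) (hq4 : q ≠ 4) (i : Fin q) :
    (adjMat (BGraph m p q) *ᵥ testVector m p q) (inr (inr i)) ≤
      227 / 100 * testVector m p q (inr (inr i)) := by
  obtain ⟨i, hi⟩ := i
  rcases Nat.eq_zero_or_pos i with rfl | hi0
  · refine (adjMat_mulVec_le_sum testVector_nonneg (s := {inr (inr ⟨1, by omega⟩),
      inr (inr ⟨q - 1, by omega⟩), inr (inl ⟨p - 2, by omega⟩)}) ?_).trans ?_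
    · rintro (⟨j, hj⟩ | ⟨j, hj⟩ | ⟨j, hj⟩) h <;>
        simp [BGraph, succ_mod_eq_iff, Fin.ext_iff] at h ⊢ <;> omega
    rw [Finset.sum_insert (by simp [Fin.ext_iff]; omega), Finset.sum_pair (by simp)]
    simp only [testVector, Sum.elim_inl, Sum.elim_inr, cycleDist_zero,
      cycleDist_one (by omega : 2 ≤ q), cycleDist_pred_self (by omega : 2 ≤ q),
      show cycleDist p (p - 2 + 1) = 1 by simp only [cycleDist]; omega]
    norm_num [bgraphCycleWeight, bgraphPathWeight]
  · refine (adjMat_mulVec_le_sum testVector_nonneg (s := {inr (inr ⟨i - 1, by omega⟩),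
      inr (inr ⟨(i + 1) % q, Nat.mod_lt _ (by omega)⟩)}) ?_).trans ?_
    · rintro (⟨j, hj⟩ | ⟨j, hj⟩ | ⟨j, hj⟩) h <;>
        simp [BGraph, succ_mod_eq_iff, eq_succ_mod_iff, Fin.ext_iff, hi] at h ⊢ <;> omega
    rw [Finset.sum_pair (by simp [Fin.ext_iff, eq_succ_mod_iff, hi]; omega)]
    exact bgraphCycleWeight_cycle_step (i := i) (a := i - 1) hq hq4 hi hi0 (by omega)
      ((succ_mod_eq_iff hi).1 rfl)

lemma mulVec_testVector_le (hm : 3 ≤ m) (hm4 : m ≠ 4) (hp : 5 ≤ p) (hq : 3 ≤ q)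
    (hq4 : q ≠ 4) :
    adjMat (BGraph m p q) *ᵥ testVector m p q ≤ (227 / 100 : ℝ) • testVector m p q := by
  rintro (i | j | i)
  exacts [mulVec_testVector_le_inl hm hm4 hp i,
    mulVec_testVector_le_path (by omega) hp (by omega) j, mulVec_testVector_le_inr hp hq hq4 i]

end BGraph

lemma specRad_BGraph_le {m p q : ℕ} (hm : 3 ≤ m) (hm4 : m ≠ 4) (hp : 5 ≤ p) (hq : 3 ≤ q)
    (hq4 : q ≠ 4) : specRad (BGraph m p q) ≤ 227 / 100 :=
  specRad_le_of_mulVec_le _ BGraph.testVector_pos (by norm_num)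
    (BGraph.mulVec_testVector_le hm hm4 hp hq hq4)

theorem CGraph_sub_mod_six_four_general (n : ℕ) (hn : 7 ≤ n) (hmod : n % 6 = 4)
    (k : ℕ) (hk : k = (n + 2) / 3)
    (V : Type) [Fintype V] (G : SimpleGraph V)
    (hsub : ∃ m q : ℕ, 3 ≤ m ∧ 3 ≤ q ∧ containsCopy (CGraph m q) G) :
    specRad (BGraph (k - 1) (k + 1) (k - 1)) < specRad G := by
  obtain ⟨m, q, hm, hq, hG⟩ := hsub
  have hcycle : 3 ≤ k - 1 ∧ k - 1 ≠ 4 := by omega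
  calc specRad (BGraph (k - 1) (k + 1) (k - 1)) ≤ 227 / 100 :=
        specRad_BGraph_le hcycle.1 hcycle.2 (by omega) hcycle.1 hcycle.2
    _ < 57 / 25 := by norm_num
    _ ≤ specRad G := le_specRad_of_containsCopy_CGraph hm hq hG

/-- Let `n ≥ 7` with `n ≡ 4 (mod 6)` and `k = ⌈n/3⌉`.  If a connected
simple graph `G` of order `n` contains a subgraph isomorphic to `C(m,q)` for some
`m, q ≥ 3`, then `ρ(G) > ρ(B(k-1, k+1, k-1))`. -/
theorem CGraph_sub_mod_six_four (n : ℕ) (hn : 7 ≤ n) (hmod : n % 6 = 4)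
    (k : ℕ) (hk : k = (n + 2) / 3)
    (V : Type) [Fintype V] (G : SimpleGraph V) (hcard : Fintype.card V = n)
    (hconn : G.Connected)
    (hsub : ∃ m q : ℕ, 3 ≤ m ∧ 3 ≤ q ∧ containsCopy (CGraph m q) G) :
    specRad (BGraph (k - 1) (k + 1) (k - 1)) < specRad G :=
  CGraph_sub_mod_six_four_general n hn hmod k hk V G hsub
end

section
/- Let m, q ≥ 3 and p ≥ 1 be integers, let x be the Perron vector of B(m,p,q) (the unique positive unit eigenvector for the spectral radius), and let u_0 and v_0 denote the two vertices of degree 3, where u_0 lies on the cycle of length m and v_0 lies on the cycle of length q. If m > q then x_{u_0} < x_{v_0}, and if m = q then x_{u_0} = x_{v_0}. -/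
open SimpleGraph

/-!
Let `ρ` be the eigenvalue. Along each cycle and along the path the eigen-equations read
`x_{i-1} + x_{i+1} = ρ x_i`. Summing them around the `m`-cycle gives `(ρ - 2) Σ x = x_{w_1} > 0`,
so `ρ = r + r⁻¹` with `r > 1` and every such segment has the form `α rⁱ + β r⁻ⁱ`.
On a cycle this forces the two cycle-neighbours of the attachment vertex to carry
`2 g(n)` times its value, where `g(n) = cycleRatio r n = (r + r^(n-1)) / (1 + r^n)` decreases
strictly in `n`.
On the path `y_0 = x_{u_0}, …, y_p = x_{v_0}` the quantity `y_0 y_{p-1} - y_1 y_p` is a positive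
multiple of `y_0² - y_p²`, while the eigen-equations at `u_0` and `v_0` show that it equals
`2 x_{u_0} x_{v_0} (g(m) - g(q))`. So `x_{u_0}² - x_{v_0}²` has the sign of `g(m) - g(q)`.
-/

open Matrix

noncomputable def cycleRatio (r : ℝ) (n : ℕ) : ℝ := (r + r ^ (n - 1)) / (1 + r ^ n)

theorem cycleRatio_strictAntiOn {r : ℝ} (hr : 1 < r) :
    StrictAntiOn (cycleRatio r) (Set.Ici 1) := by
  intro q hq m _ hqm
  obtain ⟨s, rfl⟩ : ∃ s, q = s + 1 := ⟨q - 1, by simp only [Set.mem_Ici] at hq; omega⟩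
  obtain ⟨t, rfl⟩ : ∃ t, m = s + (t + 1) + 1 := ⟨m - s - 2, by omega⟩
  have hr0 : 0 < r := by linarith
  simp only [cycleRatio, Nat.add_sub_cancel]
  rw [div_lt_div_iff₀ (by positivity) (by positivity)]
  have hgap : 0 < (r ^ 2 - 1) * r ^ s * (r ^ (t + 1) - 1) := by
    have := one_lt_pow₀ hr (n := t + 1) (by omega)
    exact mul_pos (mul_pos (by nlinarith) (by positivity)) (by linarith)
  linear_combination hgap

theorem exists_one_lt_eq_add_inv {ρ : ℝ} (h : 2 < ρ) : ∃ r, 1 < r ∧ ρ = r + r⁻¹ := by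
  have hs : Real.sqrt (ρ ^ 2 - 4) ^ 2 = ρ ^ 2 - 4 := Real.sq_sqrt (by nlinarith)
  have hs0 : 0 ≤ Real.sqrt (ρ ^ 2 - 4) := Real.sqrt_nonneg _
  refine ⟨(ρ + Real.sqrt (ρ ^ 2 - 4)) / 2, by linarith, ?_⟩
  have : ρ + Real.sqrt (ρ ^ 2 - 4) ≠ 0 := by linarith
  field_simp
  linear_combination -hs

def ChebyshevRec (ρ : ℝ) (n : ℕ) (f : ℕ → ℝ) : Prop :=
  ∀ i, 0 < i → i < n → f (i - 1) + f (i + 1) = ρ * f i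

theorem chebyshevRec_geom {r : ℝ} (hr : r ≠ 0) (n : ℕ) (α β : ℝ) :
    ChebyshevRec (r + r⁻¹) n (fun i => α * r ^ i + β * r⁻¹ ^ i) := by
  rintro (_ | i) hi -
  · exact absurd hi (lt_irrefl 0)
  · simp only [Nat.add_sub_cancel, pow_succ]
    field_simp
    ring

namespace ChebyshevRec

variable {ρ r : ℝ} {n : ℕ} {f g : ℕ → ℝ}

theorem unique (hf : ChebyshevRec ρ n f) (hg : ChebyshevRec ρ n g)
    (h0 : f 0 = g 0) (h1 : f 1 = g 1) : ∀ i ≤ n, f i = g i := by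
  have step : ∀ i, i + 1 ≤ n → f i = g i ∧ f (i + 1) = g (i + 1) := by
    intro i
    induction i with
    | zero => exact fun _ => ⟨h0, h1⟩
    | succ i ih =>
      intro hi
      obtain ⟨e0, e1⟩ := ih (by omega)
      have rf := hf (i + 1) (by omega) (by omega)
      have rg := hg (i + 1) (by omega) (by omega)
      rw [Nat.add_sub_cancel, e0, e1] at rf
      rw [Nat.add_sub_cancel] at rg
      exact ⟨e1, by linarith⟩
  rintro (_ | i) hi
  · exact h0
  · exact (step i hi).2

theorem exists_eq_geom (hr : r ≠ 0) (hr1 : r ^ 2 ≠ 1) (hf : ChebyshevRec (r + r⁻¹) n f) :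
    ∃ α β : ℝ, ∀ i ≤ n, f i = α * r ^ i + β * r⁻¹ ^ i := by
  have hd : r - r⁻¹ ≠ 0 := by
    intro h
    apply hr1
    field_simp at h
    linarith
  refine ⟨(f 1 - r⁻¹ * f 0) / (r - r⁻¹), (r * f 0 - f 1) / (r - r⁻¹), ?_⟩
  refine hf.unique (chebyshevRec_geom hr n _ _) ?_ ?_
  · field_simp
    ring
  · field_simp
    ring

theorem mul_one_add_pow_of_cycle (hr : 1 < r) (hf : ChebyshevRec (r + r⁻¹) n f)
    (hper : f n = f 0) : ∀ i ≤ n, f i * (1 + r ^ n) = f 0 * (r ^ i + r ^ (n - i)) := by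
  have hr0 : r ≠ 0 := by positivity
  obtain ⟨α, β, hαβ⟩ := hf.exists_eq_geom hr0 (by nlinarith)
  rcases Nat.eq_zero_or_pos n with rfl | hn
  · intro i hi
    obtain rfl : i = 0 := by omega
    ring
  have hβ : β = α * r ^ n := by
    rw [hαβ n le_rfl, hαβ 0 (Nat.zero_le _), inv_pow] at hper
    field_simp at hper
    have : (r ^ n - 1) * (α * r ^ n - β) = 0 := by linear_combination hper
    rcases mul_eq_zero.1 this with h | h
    · exact absurd (sub_eq_zero.1 h) (one_lt_pow₀ hr hn.ne').ne'
    · linarith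
  intro i hi
  rw [hαβ i hi, hαβ 0 (Nat.zero_le _), hβ, pow_sub₀ r hr0 hi, inv_pow]
  ring

theorem add_eq_cycleRatio (hr : 1 < r) (hn : 1 ≤ n) (hf : ChebyshevRec (r + r⁻¹) n f)
    (hper : f n = f 0) : f 1 + f (n - 1) = 2 * cycleRatio r n * f 0 := by
  have h1 := hf.mul_one_add_pow_of_cycle hr hper 1 hn
  have h2 := hf.mul_one_add_pow_of_cycle hr hper (n - 1) (by omega)
  rw [Nat.sub_sub_self hn] at h2
  rw [pow_one] at h1 h2
  have : 0 < 1 + r ^ n := by positivity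
  rw [cycleRatio]
  field_simp
  linear_combination h1 + h2

theorem wronskian_eq (hr : r ≠ 0) (hr1 : r ^ 2 ≠ 1) {p : ℕ} (hp : 1 ≤ p)
    (hf : ChebyshevRec (r + r⁻¹) p f) :
    r * (r ^ (2 * p) - 1) * (f 0 * f (p - 1) - f 1 * f p)
      = (r ^ 2 - 1) * r ^ p * (f 0 ^ 2 - f p ^ 2) := by
  obtain ⟨α, β, hαβ⟩ := hf.exists_eq_geom hr hr1
  obtain ⟨k, rfl⟩ : ∃ k, p = k + 1 := ⟨p - 1, by omega⟩
  rw [hαβ 0 (by omega), hαβ 1 (by omega), hαβ (k + 1 - 1) (by omega), hαβ (k + 1) le_rfl,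
    Nat.add_sub_cancel]
  simp only [inv_pow]
  field_simp
  ring

theorem two_lt_of_cycle (hn : 0 < n) (hf : ChebyshevRec ρ n f) (hper : f n = f 0) {c : ℝ}
    (h0 : f 1 + f (n - 1) + c = ρ * f 0) (hc : 0 < c) (hpos : ∀ i < n, 0 < f i) : 2 < ρ := by
  obtain ⟨k, rfl⟩ : ∃ k, n = k + 1 := ⟨n - 1, by omega⟩
  set S := ∑ i ∈ Finset.range (k + 1), f i
  have hS : 0 < S := Finset.sum_pos (fun i hi => hpos i (Finset.mem_range.1 hi)) ⟨0, by simp⟩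
  have interior :
      ∑ i ∈ Finset.range k, (f i + f (i + 2)) = ρ * ∑ i ∈ Finset.range k, f (i + 1) := by
    rw [Finset.mul_sum]
    refine Finset.sum_congr rfl fun i hi => ?_
    simpa using hf (i + 1) (by omega) (by simp at hi; omega)
  have e1 : S = ∑ i ∈ Finset.range k, f (i + 1) + f 0 := Finset.sum_range_succ' _ _
  have e2 : S = ∑ i ∈ Finset.range k, f i + f k := Finset.sum_range_succ _ _
  have e3 : S + f (k + 1) = ∑ i ∈ Finset.range k, f (i + 2) + f 1 + f 0 := by
    rw [← Finset.sum_range_succ, Finset.sum_range_succ', Finset.sum_range_succ']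
  rw [Finset.sum_add_distrib] at interior
  rw [Nat.add_sub_cancel] at h0
  -- every value around the cycle is counted twice
  have hcount : (ρ - 2) * S = c := by
    linear_combination ρ * e1 - h0 - interior - e2 - e3 + hper
  nlinarith

end ChebyshevRec

theorem sum_eq_mul_of_adj_iff {V : Type*} [Fintype V] {G : SimpleGraph V} {x : V → ℝ} {ρ : ℝ}
    (heig : adjMat G *ᵥ x = ρ • x) {v : V} {s : Finset V} (hs : ∀ w, G.Adj v w ↔ w ∈ s) :
    ∑ w ∈ s, x w = ρ * x v := by
  classical
  have h := congrFun heig v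
  rw [Pi.smul_apply, smul_eq_mul, adjMat] at h
  rw [← h]
  convert (G.adjMatrix_mulVec_apply v x).symm
  ext w
  simp [hs]

theorem add_eq_mul_of_adj_iff {V : Type*} [Fintype V] [DecidableEq V] {G : SimpleGraph V}
    {x : V → ℝ} {ρ : ℝ} (heig : adjMat G *ᵥ x = ρ • x) {v a b : V} (hab : a ≠ b)
    (hv : ∀ w, G.Adj v w ↔ w = a ∨ w = b) : x a + x b = ρ * x v := by
  rw [← Finset.sum_pair hab]
  exact sum_eq_mul_of_adj_iff heig (by simpa using hv)

theorem add_add_eq_mul_of_adj_iff {V : Type*} [Fintype V] [DecidableEq V] {G : SimpleGraph V}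
    {x : V → ℝ} {ρ : ℝ} (heig : adjMat G *ᵥ x = ρ • x) {v a b c : V} (hab : a ≠ b)
    (hac : a ≠ c) (hbc : b ≠ c) (hv : ∀ w, G.Adj v w ↔ w = a ∨ w = b ∨ w = c) :
    x a + x b + x c = ρ * x v := by
  rw [add_assoc, ← Finset.sum_pair hbc, ← Finset.sum_insert (by simp [hab, hac])]
  exact sum_eq_mul_of_adj_iff heig (by simpa using hv)

theorem Nat.add_one_mod_eq_ite {i n : ℕ} (h : i < n) :
    (i + 1) % n = if i + 1 = n then 0 else i + 1 := by
  split_ifs with h'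
  · simp [h']
  · exact Nat.mod_eq_of_lt (by omega)

namespace BGraph

variable {m p q : ℕ}

def uVert [NeZero m] (i : ℕ) : Fin m ⊕ Fin (p - 1) ⊕ Fin q :=
  .inl ⟨i % m, Nat.mod_lt _ (NeZero.pos m)⟩

def vVert [NeZero q] (j : ℕ) : Fin m ⊕ Fin (p - 1) ⊕ Fin q :=
  .inr (.inr ⟨j % q, Nat.mod_lt _ (NeZero.pos q)⟩)

/-- The path `u_0 = w_0, w_1, …, w_p = v_0`. -/
def wVert [NeZero m] [NeZero q] (k : ℕ) : Fin m ⊕ Fin (p - 1) ⊕ Fin q :=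
  if k = 0 then uVert 0 else if h : k - 1 < p - 1 then .inr (.inl ⟨k - 1, h⟩) else vVert 0

theorem uVert_eq_uVert_iff [NeZero m] {i j : ℕ} :
    (uVert i : Fin m ⊕ Fin (p - 1) ⊕ Fin q) = uVert j ↔ i % m = j % m := by
  simp [uVert, Fin.ext_iff]

theorem vVert_eq_vVert_iff [NeZero q] {i j : ℕ} :
    (vVert i : Fin m ⊕ Fin (p - 1) ⊕ Fin q) = vVert j ↔ i % q = j % q := by
  simp [vVert, Fin.ext_iff]

theorem uVert_ne_wVert [NeZero m] [NeZero q] (i : ℕ) {k : ℕ} (hk : 0 < k) :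
    (uVert i : Fin m ⊕ Fin (p - 1) ⊕ Fin q) ≠ wVert k := by
  unfold wVert; split_ifs <;> simp [uVert, vVert]; omega

theorem vVert_ne_wVert [NeZero m] [NeZero q] (j : ℕ) {k : ℕ} (hk : k < p) :
    (vVert j : Fin m ⊕ Fin (p - 1) ⊕ Fin q) ≠ wVert k := by
  unfold wVert; split_ifs <;> simp [uVert, vVert]; omega

theorem wVert_injOn [NeZero m] [NeZero q] :
    Set.InjOn (wVert : ℕ → Fin m ⊕ Fin (p - 1) ⊕ Fin q) (Set.Iic p) := by
  intro k hk l hl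
  simp only [Set.mem_Iic] at hk hl
  unfold wVert; split_ifs <;> simp [uVert, vVert] <;> omega

theorem adj_uVert_iff [NeZero m] (hm : 3 ≤ m) {i : ℕ} (h0 : 0 < i) (hi : i < m)
    (w : Fin m ⊕ Fin (p - 1) ⊕ Fin q) :
    (BGraph m p q).Adj (uVert i) w ↔ w = uVert (i - 1) ∨ w = uVert (i + 1) := by
  rcases w with ⟨j, hj⟩ | ⟨j, hj⟩ | ⟨j, hj⟩ <;> simp only [BGraph, fromRel_adj] <;>
    simp [uVert, Fin.ext_iff, Nat.mod_eq_of_lt hi, Nat.mod_eq_of_lt (by omega : i - 1 < m),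
      Nat.add_one_mod_eq_ite hi, Nat.add_one_mod_eq_ite hj] <;> grind

theorem adj_vVert_iff [NeZero q] (hq : 3 ≤ q) {j : ℕ} (h0 : 0 < j) (hj : j < q)
    (w : Fin m ⊕ Fin (p - 1) ⊕ Fin q) :
    (BGraph m p q).Adj (vVert j) w ↔ w = vVert (j - 1) ∨ w = vVert (j + 1) := by
  rcases w with ⟨i, hi⟩ | ⟨i, hi⟩ | ⟨i, hi⟩ <;> simp only [BGraph, fromRel_adj] <;>
    simp [vVert, Fin.ext_iff, Nat.mod_eq_of_lt hj, Nat.mod_eq_of_lt (by omega : j - 1 < q),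
      Nat.add_one_mod_eq_ite hj, Nat.add_one_mod_eq_ite hi] <;> grind

theorem adj_wVert_iff [NeZero m] [NeZero q] {k : ℕ} (h0 : 0 < k) (hk : k < p)
    (w : Fin m ⊕ Fin (p - 1) ⊕ Fin q) :
    (BGraph m p q).Adj (wVert k) w ↔ w = wVert (k - 1) ∨ w = wVert (k + 1) := by
  rcases w with ⟨j, hj⟩ | ⟨j, hj⟩ | ⟨j, hj⟩ <;> simp only [wVert] <;> split_ifs <;>
    simp only [BGraph, fromRel_adj] <;> simp [uVert, vVert, Fin.ext_iff] <;> grind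

theorem adj_uVert_zero_iff [NeZero m] [NeZero q] (hm : 3 ≤ m) (hp : 1 ≤ p)
    (w : Fin m ⊕ Fin (p - 1) ⊕ Fin q) :
    (BGraph m p q).Adj (uVert 0) w ↔ w = uVert 1 ∨ w = uVert (m - 1) ∨ w = wVert 1 := by
  rcases w with ⟨j, hj⟩ | ⟨j, hj⟩ | ⟨j, hj⟩ <;> simp only [wVert] <;> split_ifs <;>
    simp only [BGraph, fromRel_adj] <;>
    simp [uVert, vVert, Fin.ext_iff, Nat.mod_eq_of_lt (by omega : 1 < m),
      Nat.mod_eq_of_lt (by omega : m - 1 < m), Nat.add_one_mod_eq_ite hj] <;> grind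

theorem adj_vVert_zero_iff [NeZero m] [NeZero q] (hq : 3 ≤ q) (hp : 1 ≤ p)
    (w : Fin m ⊕ Fin (p - 1) ⊕ Fin q) :
    (BGraph m p q).Adj (vVert 0) w ↔ w = vVert 1 ∨ w = vVert (q - 1) ∨ w = wVert (p - 1) := by
  rcases w with ⟨j, hj⟩ | ⟨j, hj⟩ | ⟨j, hj⟩ <;> simp only [wVert] <;> split_ifs <;>
    simp only [BGraph, fromRel_adj] <;>
    simp [uVert, vVert, Fin.ext_iff, Nat.mod_eq_of_lt (by omega : 1 < q),
      Nat.mod_eq_of_lt (by omega : q - 1 < q), Nat.add_one_mod_eq_ite hj] <;> grind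

variable {x : Fin m ⊕ Fin (p - 1) ⊕ Fin q → ℝ} {ρ : ℝ}

theorem chebyshevRec_uVert [NeZero m] (hm : 3 ≤ m)
    (heig : adjMat (BGraph m p q) *ᵥ x = ρ • x) :
    ChebyshevRec ρ m (fun i => x (uVert i)) := by
  intro i h0 hi
  refine add_eq_mul_of_adj_iff heig ?_ (adj_uVert_iff hm h0 hi)
  rw [Ne, uVert_eq_uVert_iff, Nat.mod_eq_of_lt (by omega : i - 1 < m), Nat.add_one_mod_eq_ite hi]
  split_ifs <;> omega

theorem chebyshevRec_vVert [NeZero q] (hq : 3 ≤ q)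
    (heig : adjMat (BGraph m p q) *ᵥ x = ρ • x) :
    ChebyshevRec ρ q (fun j => x (vVert j)) := by
  intro j h0 hj
  refine add_eq_mul_of_adj_iff heig ?_ (adj_vVert_iff hq h0 hj)
  rw [Ne, vVert_eq_vVert_iff, Nat.mod_eq_of_lt (by omega : j - 1 < q), Nat.add_one_mod_eq_ite hj]
  split_ifs <;> omega

theorem chebyshevRec_wVert [NeZero m] [NeZero q] (heig : adjMat (BGraph m p q) *ᵥ x = ρ • x) :
    ChebyshevRec ρ p (fun k => x (wVert k)) := fun k h0 hk =>
  add_eq_mul_of_adj_iff heig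
    ((wVert_injOn.ne_iff (by simp; omega) (by simp; omega)).2 (by omega)) (adj_wVert_iff h0 hk)

theorem eigen_uVert_zero [NeZero m] [NeZero q] (hm : 3 ≤ m) (hp : 1 ≤ p)
    (heig : adjMat (BGraph m p q) *ᵥ x = ρ • x) :
    x (uVert 1) + x (uVert (m - 1)) + x (wVert 1) = ρ * x (uVert 0) := by
  refine add_add_eq_mul_of_adj_iff heig ?_ (uVert_ne_wVert _ one_pos) (uVert_ne_wVert _ one_pos)
    (adj_uVert_zero_iff hm hp)
  rw [Ne, uVert_eq_uVert_iff, Nat.mod_eq_of_lt (by omega : 1 < m),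
    Nat.mod_eq_of_lt (by omega : m - 1 < m)]
  omega

theorem eigen_vVert_zero [NeZero m] [NeZero q] (hq : 3 ≤ q) (hp : 1 ≤ p)
    (heig : adjMat (BGraph m p q) *ᵥ x = ρ • x) :
    x (vVert 1) + x (vVert (q - 1)) + x (wVert (p - 1)) = ρ * x (vVert 0) := by
  refine add_add_eq_mul_of_adj_iff heig ?_ (vVert_ne_wVert _ (by omega))
    (vVert_ne_wVert _ (by omega)) (adj_vVert_zero_iff hq hp)
  rw [Ne, vVert_eq_vVert_iff, Nat.mod_eq_of_lt (by omega : 1 < q),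
    Nat.mod_eq_of_lt (by omega : q - 1 < q)]
  omega

theorem exists_sq_sub_sq_eq_mul_cycleRatio_sub [NeZero m] [NeZero q] (hm : 3 ≤ m) (hq : 3 ≤ q)
    (hp : 1 ≤ p) (hpos : ∀ v, 0 < x v) (heig : adjMat (BGraph m p q) *ᵥ x = ρ • x) :
    ∃ r > 1, ∃ c > 0,
      x (uVert 0) ^ 2 - x (vVert 0) ^ 2 = c * (cycleRatio r m - cycleRatio r q) := by
  have hU := chebyshevRec_uVert hm heig
  have hu0 := eigen_uVert_zero hm hp heig
  have hv0 := eigen_vVert_zero hq hp heig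
  have hUper : x (uVert m) = x (uVert 0) := congrArg x (uVert_eq_uVert_iff.2 (by simp))
  have hVper : x (vVert q) = x (vVert 0) := congrArg x (vVert_eq_vVert_iff.2 (by simp))
  obtain ⟨r, hr, rfl⟩ := exists_one_lt_eq_add_inv <|
    hU.two_lt_of_cycle (by omega) hUper hu0 (hpos _) fun i _ => hpos _
  have hA := hU.add_eq_cycleRatio hr (by omega) hUper
  have hB := (chebyshevRec_vVert hq heig).add_eq_cycleRatio hr (by omega) hVper
  have hW := (chebyshevRec_wVert heig).wronskian_eq (by positivity) (by nlinarith) hp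
  have hw0 : wVert 0 = (uVert 0 : Fin m ⊕ Fin (p - 1) ⊕ Fin q) := by simp [wVert]
  have hwp : wVert p = (vVert 0 : Fin m ⊕ Fin (p - 1) ⊕ Fin q) := by simp [wVert]; omega
  simp only [hw0, hwp] at hW
  have hr2 : 0 < r ^ 2 - 1 := by nlinarith
  have hr2p : 0 < r ^ (2 * p) - 1 := by linarith [one_lt_pow₀ hr (n := 2 * p) (by omega)]
  have ha := hpos (uVert 0)
  have hb := hpos (vVert 0)
  refine ⟨r, hr, 2 * r * (r ^ (2 * p) - 1) * x (uVert 0) * x (vVert 0) / ((r ^ 2 - 1) * r ^ p),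
    by positivity, ?_⟩
  field_simp
  -- by the eigen-equations at `u_0` and `v_0`, the path Wronskian in `hW` equals
  -- `2 x_{u_0} x_{v_0} (g(m) - g(q))`
  linear_combination -hW + r * (r ^ (2 * p) - 1) * (x (uVert 0) * hv0 - x (vVert 0) * hu0
    + x (vVert 0) * hA - x (uVert 0) * hB)

end BGraph

/-- Let `m, q ≥ 3`, `p ≥ 1`, and let `x` be the Perron vector of
`B(m,p,q)`: the positive unit eigenvector of the adjacency matrix corresponding to the
spectral radius.  Let `u_0 = Sum.inl 0` and `v_0 = Sum.inr (Sum.inr 0)` be the two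
vertices of degree `3`, on the `m`-cycle and the `q`-cycle respectively.  If `m > q`
then `xature{u_0} < x_{v_0}`, and if `m = q` then `x_{u_0} = x_{v_0}`. -/
theorem perron_BGraph (m p q : ℕ) (hm : 3 ≤ m) (hq : 3 ≤ q) (hp : 1 ≤ p)
    (x : Fin m ⊕ Fin (p - 1) ⊕ Fin q → ℝ)
    (hpos : ∀ v, 0 < x v)
    (heig : Matrix.mulVec (adjMat (BGraph m p q)) x = specRad (BGraph m p q) • x) :
    (q < m → x (Sum.inl ⟨0, by omega⟩) < x (Sum.inr (Sum.inr ⟨0, by omega⟩))) ∧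
    (m = q → x (Sum.inl ⟨0, by omega⟩) = x (Sum.inr (Sum.inr ⟨0, by omega⟩))) := by
  have : NeZero m := ⟨by omega⟩
  have : NeZero q := ⟨by omega⟩
  obtain ⟨r, hr, c, hc, key⟩ :=
    BGraph.exists_sq_sub_sq_eq_mul_cycleRatio_sub hm hq hp hpos heig
  have hu : BGraph.uVert 0 = (Sum.inl ⟨0, by omega⟩ : Fin m ⊕ Fin (p - 1) ⊕ Fin q) := by
    simp [BGraph.uVert]
  have hv :
      BGraph.vVert 0 = (Sum.inr (Sum.inr ⟨0, by omega⟩) : Fin m ⊕ Fin (p - 1) ⊕ Fin q) := by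
    simp [BGraph.vVert]
  rw [hu, hv] at key
  refine ⟨fun hqm => ?_, fun hmq => ?_⟩
  · have := cycleRatio_strictAntiOn hr (show 1 ≤ q by omega) (show 1 ≤ m by omega) hqm
    refine (pow_lt_pow_iff_left₀ (hpos _).le (hpos _).le two_ne_zero).1 ?_
    linarith [mul_neg_of_pos_of_neg hc (sub_neg.2 this)]
  · subst hmq
    rw [sub_self, mul_zero, sub_eq_zero] at key
    exact (sq_eq_sq₀ (hpos _).le (hpos _).le).1 key
end
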